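/- arXiv:math/0510444 — 3 statements merged into one kernel-verified Lean document; each statement's English description precedes it below -/
import Mathlib

section
/- Let F be an arbitrary field, let K be a finite extension of F(T), and let φ ∈ K[z] be a polynomial of degree d ≥ 2. Suppose that there are at least three points in P^1(K) of canonical height zero under φ. Then the following are equivalent: (a) there is a K-rational affine change of coordinates γ(z) = a z + b (with a ∈ K^×, b ∈ K) for which γ^{-1} ∘ φ ∘ γ has all of its coefficients in the constant field F_K of K; (b) φ, viewed as a polynomial over C_v, has potentially good reduction at every v ∈ M_K. -/
open Polynomial

/-- Sequential completeness of a field with respect to an absolute value. -/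
def SeqComplete {Cv : Type*} [Field Cv] (v : AbsoluteValue Cv ℝ) : Prop :=
  ∀ s : ℕ → Cv, (∀ ε : ℝ, 0 < ε → ∃ N : ℕ, ∀ m ≥ N, ∀ n ≥ N, v (s m - s n) < ε) →
    ∃ L : Cv, ∀ ε : ℝ, 0 < ε → ∃ N : ℕ, ∀ n ≥ N, v (s n - L) < ε

/-- The standard Weil height on `P^1(K) = K ∪ {∞}` (with `∞` modelled by `none`)
attached to a family of absolute values `absv` on `K` normalized so that the
product formula holds: `h(x) = ∑_v log max{|x|_v, 1}` and `h(∞) = 0`. -/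
noncomputable def weilHt {K : Type*} [Field K] {ι : Type*}
    (absv : ι → AbsoluteValue K ℝ) : Option K → ℝ
  | none => 0
  | some x => ∑ᶠ i, Real.log (max (absv i x) 1)

/-- The self-map of `P^1(K) = K ∪ {∞}` induced by a polynomial `φ ∈ K[z]`. -/
def polyMap {K : Type*} [Field K] (φ : Polynomial K) : Option K → Option K
  | none => none
  | some x => some (φ.eval x)

/-- `(p, q)` is a normalized degree-`n` homogeneous presentation with good reduction:
all coefficients are integral, some coefficient is a unit, and the reductions have no
common zero in `P^1` of the residue field. -/
def IsGoodPair {Cv : Type*} [Field Cv] (v : AbsoluteValue Cv ℝ)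
    (p q : Polynomial Cv) (n : ℕ) : Prop :=
  p.natDegree ≤ n ∧ q.natDegree ≤ n ∧
  (∀ m : ℕ, v (p.coeff m) ≤ 1) ∧ (∀ m : ℕ, v (q.coeff m) ≤ 1) ∧
  ((∃ m : ℕ, v (p.coeff m) = 1) ∨ (∃ m : ℕ, v (q.coeff m) = 1)) ∧
  (∀ a : Cv, v a ≤ 1 → ¬(v (p.eval a) < 1 ∧ v (q.eval a) < 1)) ∧
  ¬(v (p.coeff n) < 1 ∧ v (q.coeff n) < 1)

/-- The degree-`n` rational map `p/q` has good reduction: some scaling of the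
presentation `(p, q)` is normalized with good reduction. -/
def HasGoodReduction {Cv : Type*} [Field Cv] (v : AbsoluteValue Cv ℝ)
    (p q : Polynomial Cv) (n : ℕ) : Prop :=
  ∃ c : Cv, c ≠ 0 ∧ IsGoodPair v (C c * p) (C c * q) n

/-- Numerator of the conjugate `h⁻¹ ∘ φ ∘ h` of a polynomial `φ` by the Möbius
transformation `h(z) = (m_a z + m_b)/(m_c z + m_d)`. -/
noncomputable def conjNum {Cv : Type*} [Field Cv] (φ : Polynomial Cv)
    (ma mb mc md : Cv) : Polynomial Cv :=
  C md * (∑ i ∈ Finset.range (φ.natDegree + 1),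
      C (φ.coeff i) * (C ma * X + C mb) ^ i * (C mc * X + C md) ^ (φ.natDegree - i)) -
    C mb * (C mc * X + C md) ^ φ.natDegree

/-- Denominator of the conjugate `h⁻¹ ∘ φ ∘ h` of a polynomial `φ` by the Möbius
transformation `h(z) = (m_a z + m_b)/(m_c z + m_d)`. -/
noncomputable def conjDen {Cv : Type*} [Field Cv] (φ : Polynomial Cv)
    (ma mb mc md : Cv) : Polynomial Cv :=
  C ma * (C mc * X + C md) ^ φ.natDegree -
    C mc * (∑ i ∈ Finset.range (φ.natDegree + 1),
      C (φ.coeff i) * (C ma * X + C mb) ^ i * (C mc * X + C md) ^ (φ.natDegree - i))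

/-- A polynomial `φ ∈ C_v[z]` has potentially good reduction if some conjugate
`h⁻¹ ∘ φ ∘ h` by a Möbius transformation `h ∈ PGL(2, C_v)` has good reduction. -/
def HasPotentiallyGoodReduction {Cv : Type*} [Field Cv] (v : AbsoluteValue Cv ℝ)
    (φ : Polynomial Cv) : Prop :=
  ∃ ma mb mc md : Cv, ma * md - mb * mc ≠ 0 ∧
    HasGoodReduction v (conjNum φ ma mb mc md) (conjDen φ ma mb mc md) φ.natDegree


section Helpers
variable {L : Type*} [Field L] {w : AbsoluteValue L ℝ}

lemma nonarch_sum_le (hw : IsNonarchimedean w) {ι : Type*} (s : Finset ι) (f : ι → L)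
    {B : ℝ} (hB : 0 ≤ B) (h : ∀ i ∈ s, w (f i) ≤ B) : w (∑ i ∈ s, f i) ≤ B := by
  classical
  induction s using Finset.cons_induction with
  | empty => simpa using hB
  | cons a s ha ih =>
    rw [Finset.sum_cons]
    refine le_trans (hw _ _) (max_le (h a (Finset.mem_cons_self a s)) ?_)
    exact ih fun i hi => h i (Finset.mem_cons_of_mem hi)

lemma nonarch_add_eq (hw : IsNonarchimedean w) {a b : L} (h : w a < w b) :
    w (a + b) = w b := by
  have h1 : w (a + b) ≤ w b := le_trans (hw a b) (max_le h.le le_rfl)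
  have h2 : w b ≤ max (w a) (w (a + b)) := by
    have := hw (-a) (a + b)
    simpa [map_neg _] using this
  rcases max_cases (w a) (w (a + b)) with ⟨he, _⟩ | ⟨he, _⟩
  · rw [he] at h2; exact absurd (lt_of_le_of_lt h2 h) (lt_irrefl _)
  · rw [he] at h2; exact le_antisymm h1 h2

end Helpers

section Hev
variable {L : Type*} [Field L]

/-- degree-`n` homogeneous evaluation of a polynomial. -/
noncomputable def hev (p : Polynomial L) (n : ℕ) (x y : L) : L :=
  ∑ j ∈ Finset.range (n+1), p.coeff j * x^j * y^(n-j)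

lemma hev_C_mul (c : L) (p : Polynomial L) (n : ℕ) (x y : L) :
    hev (C c * p) n x y = c * hev p n x y := by
  simp [hev, Finset.mul_sum, coeff_C_mul, mul_assoc]

lemma hev_sub (p q : Polynomial L) (n : ℕ) (x y : L) :
    hev (p - q) n x y = hev p n x y - hev q n x y := by
  simp [hev, coeff_sub, sub_mul, Finset.sum_sub_distrib]

lemma hev_sum {ι : Type*} (s : Finset ι) (f : ι → Polynomial L) (n : ℕ) (x y : L) :
    hev (∑ i ∈ s, f i) n x y = ∑ i ∈ s, hev (f i) n x y := by
  simp [hev, finset_sum_coeff, Finset.sum_mul]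
  rw [Finset.sum_comm]

lemma hev_zero_deg (p : Polynomial L) (x y : L) : hev p 0 x y = p.coeff 0 := by
  simp [hev]

lemma natDegree_linpow_le (u v : L) (k : ℕ) : ((C u * X + C v)^k).natDegree ≤ k := by
  refine le_trans natDegree_pow_le ?_
  have h := natDegree_linear_le (a := u) (b := v)
  calc k * (C u * X + C v).natDegree ≤ k * 1 := Nat.mul_le_mul le_rfl h
    _ = k := by omega

lemma hev_linear_mul {q : Polynomial L} {n : ℕ} (hq : q.natDegree ≤ n) (u v x y : L) :
    hev ((C u * X + C v) * q) (n+1) x y = (u * x + v * y) * hev q n x y := by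
  have hXq : ∀ k : ℕ, (X * q).coeff k = if k = 0 then 0 else q.coeff (k-1) := by
    intro k
    cases k with
    | zero => simp
    | succ m => simp [coeff_X_mul]
  have hcoeff : ∀ k : ℕ, ((C u * X + C v) * q).coeff k * x^k * y^(n+1-k)
      = u * ((X * q).coeff k * x^k * y^(n+1-k)) + v * (q.coeff k * x^k * y^(n+1-k)) := by
    intro k
    rw [add_mul, coeff_add, mul_assoc (C u) X q, coeff_C_mul, coeff_C_mul]
    ring
  unfold hev
  rw [Finset.sum_congr rfl (fun k _ => hcoeff k), Finset.sum_add_distrib]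
  have h1 : (∑ k ∈ Finset.range (n+1+1), u * ((X * q).coeff k * x^k * y^(n+1-k)))
      = u * x * ∑ k ∈ Finset.range (n+1), q.coeff k * x^k * y^(n-k) := by
    have e : (∑ k ∈ Finset.range (n+1+1), u * ((X * q).coeff k * x^k * y^(n+1-k)))
        = (∑ k ∈ Finset.range (n+1), u * ((X * q).coeff (k+1) * x^(k+1) * y^(n+1-(k+1))))
          + u * ((X * q).coeff 0 * x^0 * y^(n+1-0)) :=
      Finset.sum_range_succ' _ (n+1)
    rw [e]
    have hz : (X * q).coeff 0 = 0 := by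
      rw [hXq]; simp
    rw [hz, Finset.mul_sum]
    simp only [zero_mul, mul_zero, add_zero]
    refine Finset.sum_congr rfl fun k hk => ?_
    have hk' : k ≤ n := Nat.lt_succ_iff.mp (Finset.mem_range.mp hk)
    have hns : n + 1 - (k + 1) = n - k := by omega
    rw [coeff_X_mul, hns, pow_succ]
    ring
  have h2 : (∑ k ∈ Finset.range (n+1+1), v * (q.coeff k * x^k * y^(n+1-k)))
      = v * y * ∑ k ∈ Finset.range (n+1), q.coeff k * x^k * y^(n-k) := by
    rw [Finset.sum_range_succ]
    have hqtop : q.coeff (n+1) = 0 := coeff_eq_zero_of_natDegree_lt (by omega)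
    rw [hqtop, Finset.mul_sum]
    simp only [zero_mul, mul_zero, add_zero]
    refine Finset.sum_congr rfl fun k hk => ?_
    have hk' : k ≤ n := Nat.lt_succ_iff.mp (Finset.mem_range.mp hk)
    have hns : n + 1 - k = (n - k) + 1 := by omega
    rw [hns, pow_succ]
    ring
  rw [h1, h2]
  ring

lemma hev_lin_pow (u v x y : L) (j : ℕ) :
    hev ((C u * X + C v)^j) j x y = (u * x + v * y)^j := by
  induction j with
  | zero => simp [hev_zero_deg]
  | succ k ih =>
    rw [pow_succ, mul_comm ((C u * X + C v)^k) _, pow_succ]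
    rw [hev_linear_mul (natDegree_linpow_le u v k) u v x y, ih]
    ring

lemma hev_mixed (u v s t x y : L) (i j : ℕ) :
    hev ((C u * X + C v)^i * (C s * X + C t)^j) (i+j) x y
      = (u * x + v * y)^i * (s * x + t * y)^j := by
  induction i with
  | zero => simpa using hev_lin_pow s t x y j
  | succ k ih =>
    have hdeg : ((C u * X + C v)^k * (C s * X + C t)^j).natDegree ≤ k + j :=
      le_trans natDegree_mul_le (add_le_add (natDegree_linpow_le u v k) (natDegree_linpow_le s t j))
    have e1 : (C u * X + C v)^(k+1) * (C s * X + C t)^j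
        = (C u * X + C v) * ((C u * X + C v)^k * (C s * X + C t)^j) := by ring
    have e2 : k + 1 + j = (k + j) + 1 := by omega
    rw [e1, e2, hev_linear_mul hdeg, ih]
    ring

lemma hev_eval {p : Polynomial L} {n : ℕ} (hp : p.natDegree ≤ n) (x : L) :
    hev p n x 1 = p.eval x := by
  rw [eval_eq_sum_range' (Nat.lt_succ_of_le hp)]
  simp [hev]

lemma hev_at_01 (p : Polynomial L) (n : ℕ) : hev p n 0 1 = p.coeff 0 := by
  unfold hev
  rw [Finset.sum_eq_single 0]
  · simp
  · intro k _ hk; simp [zero_pow hk]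
  · simp

lemma hev_at_10 (p : Polynomial L) (n : ℕ) : hev p n 1 0 = p.coeff n := by
  unfold hev
  rw [Finset.sum_eq_single n]
  · simp
  · intro k hk hkn
    have hnk : n - k ≠ 0 := by
      have := Finset.mem_range.mp hk; omega
    simp [zero_pow hnk]
  · intro h; exact (h (Finset.self_mem_range_succ n)).elim

lemma hev_homog (p : Polynomial L) (n : ℕ) (t x y : L) :
    hev p n (t*x) (t*y) = t^n * hev p n x y := by
  unfold hev
  rw [Finset.mul_sum]
  refine Finset.sum_congr rfl fun k hk => ?_
  have hk' : k ≤ n := Nat.lt_succ_iff.mp (Finset.mem_range.mp hk)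
  rw [mul_pow, mul_pow]
  have : t^k * t^(n-k) = t^n := by rw [← pow_add]; congr 1; omega
  calc p.coeff k * (t^k * x^k) * (t^(n-k) * y^(n-k))
      = (t^k * t^(n-k)) * (p.coeff k * x^k * y^(n-k)) := by ring
    _ = t^n * (p.coeff k * x^k * y^(n-k)) := by rw [this]

end Hev

section ConjForms
variable {L : Type*} [Field L]

lemma hev_mixed' {i j n : ℕ} (h : i + j = n) (u v s t x y : L) :
    hev ((C u * X + C v)^i * (C s * X + C t)^j) n x y
      = (u * x + v * y)^i * (s * x + t * y)^j := by
  subst h; exact hev_mixed u v s t x y i j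

lemma hev_conjNum (φ : Polynomial L) (ma mb mc md x y : L) :
    hev (conjNum φ ma mb mc md) φ.natDegree x y
      = md * (∑ i ∈ Finset.range (φ.natDegree + 1),
          φ.coeff i * (ma*x + mb*y)^i * (mc*x + md*y)^(φ.natDegree - i))
        - mb * (mc*x + md*y)^φ.natDegree := by
  unfold conjNum
  rw [hev_sub, hev_C_mul, hev_C_mul, hev_sum]
  have e1 : ∀ i ∈ Finset.range (φ.natDegree + 1),
      hev (C (φ.coeff i) * (C ma * X + C mb) ^ i * (C mc * X + C md) ^ (φ.natDegree - i))
        φ.natDegree x y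
      = φ.coeff i * (ma*x + mb*y)^i * (mc*x + md*y)^(φ.natDegree - i) := by
    intro i hi
    have hi' : i ≤ φ.natDegree := Nat.lt_succ_iff.mp (Finset.mem_range.mp hi)
    rw [mul_assoc, hev_C_mul, hev_mixed' (by omega) ma mb mc md x y, mul_assoc]
  rw [Finset.sum_congr rfl e1]
  have e2 : hev ((C mc * X + C md) ^ φ.natDegree) φ.natDegree x y
      = (mc*x + md*y)^φ.natDegree := hev_lin_pow mc md x y φ.natDegree
  rw [e2]

lemma hev_conjDen (φ : Polynomial L) (ma mb mc md x y : L) :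
    hev (conjDen φ ma mb mc md) φ.natDegree x y
      = ma * (mc*x + md*y)^φ.natDegree
        - mc * (∑ i ∈ Finset.range (φ.natDegree + 1),
          φ.coeff i * (ma*x + mb*y)^i * (mc*x + md*y)^(φ.natDegree - i)) := by
  unfold conjDen
  rw [hev_sub, hev_C_mul, hev_C_mul, hev_sum]
  have e1 : ∀ i ∈ Finset.range (φ.natDegree + 1),
      hev (C (φ.coeff i) * (C ma * X + C mb) ^ i * (C mc * X + C md) ^ (φ.natDegree - i))
        φ.natDegree x y
      = φ.coeff i * (ma*x + mb*y)^i * (mc*x + md*y)^(φ.natDegree - i) := by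
    intro i hi
    have hi' : i ≤ φ.natDegree := Nat.lt_succ_iff.mp (Finset.mem_range.mp hi)
    rw [mul_assoc, hev_C_mul, hev_mixed' (by omega) ma mb mc md x y, mul_assoc]
  rw [Finset.sum_congr rfl e1]
  rw [hev_lin_pow mc md x y φ.natDegree]

/-- key identity (I): the combination `mc·F + md·G` is a pure `D`-th power. -/
lemma conj_cross (φ : Polynomial L) (ma mb mc md x y : L) :
    mc * hev (conjNum φ ma mb mc md) φ.natDegree x y
      + md * hev (conjDen φ ma mb mc md) φ.natDegree x y
      = (ma*md - mb*mc) * (mc*x + md*y)^φ.natDegree := by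
  rw [hev_conjNum, hev_conjDen]
  ring

/-- evaluation of the conjugate pair at the "adjugate" representative of `z`. -/
lemma conj_special (φ : Polynomial L) (ma mb mc md z : L) :
    hev (conjNum φ ma mb mc md) φ.natDegree (md*z - mb) (ma - mc*z)
      = (ma*md - mb*mc)^φ.natDegree * (md * φ.eval z - mb)
    ∧ hev (conjDen φ ma mb mc md) φ.natDegree (md*z - mb) (ma - mc*z)
      = (ma*md - mb*mc)^φ.natDegree * (ma - mc * φ.eval z) := by
  set δ := ma*md - mb*mc with hδ
  set D := φ.natDegree with hD
  have l1 : ma * (md*z - mb) + mb * (ma - mc*z) = δ * z := by rw [hδ]; ring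
  have l2 : mc * (md*z - mb) + md * (ma - mc*z) = δ := by rw [hδ]; ring
  have hNV : (∑ i ∈ Finset.range (D + 1),
      φ.coeff i * (ma*(md*z - mb) + mb*(ma - mc*z))^i
        * (mc*(md*z - mb) + md*(ma - mc*z))^(D - i)) = δ^D * φ.eval z := by
    rw [eval_eq_sum_range' (Nat.lt_succ_of_le (le_refl D)), Finset.mul_sum]
    refine Finset.sum_congr rfl fun i hi => ?_
    have hi' : i ≤ D := Nat.lt_succ_iff.mp (Finset.mem_range.mp hi)
    rw [l1, l2, mul_pow]
    have : δ^i * δ^(D-i) = δ^D := by rw [← pow_add]; congr 1; omega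
    calc φ.coeff i * (δ^i * z^i) * δ^(D-i)
        = (δ^i * δ^(D-i)) * (φ.coeff i * z^i) := by ring
      _ = δ^D * (φ.coeff i * z^i) := by rw [this]
  constructor
  · rw [hev_conjNum, hNV, l2]; ring
  · rw [hev_conjDen, hNV, l2]; ring

end ConjForms

section GoodPairMetric
variable {L : Type*} [Field L] {w : AbsoluteValue L ℝ}

lemma one_le_msprod : ∀ (s : Multiset ℝ), (∀ u ∈ s, 1 ≤ u) → 1 ≤ s.prod := fun s =>
  Multiset.induction_on s (fun _ => by simp) (fun a t ih h => by
    rw [Multiset.prod_cons]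
    have ha := h a (Multiset.mem_cons_self a t)
    have ht := ih fun u hu => h u (Multiset.mem_cons_of_mem hu)
    nlinarith)

lemma msprod_single_le {s : Multiset ℝ} (h : ∀ u ∈ s, 1 ≤ u) {x : ℝ} (hx : x ∈ s) :
    x ≤ s.prod := by
  obtain ⟨t, rfl⟩ := Multiset.exists_cons_of_mem hx
  rw [Multiset.prod_cons]
  have ht : (1:ℝ) ≤ t.prod := one_le_msprod t fun u hu => h u (Multiset.mem_cons_of_mem hu)
  have hx1 : 1 ≤ x := h x (Multiset.mem_cons_self x t)
  nlinarith

lemma term_le_one {a x y : L} (ha : w a ≤ 1) (hx : w x ≤ 1) (hy : w y ≤ 1)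
    (j k : ℕ) : w (a * x^j * y^k) ≤ 1 := by
  rw [map_mul, map_mul, map_pow, map_pow]
  exact mul_le_one₀
    (mul_le_one₀ ha (pow_nonneg (w.nonneg x) j) (pow_le_one₀ (w.nonneg x) hx))
    (pow_nonneg (w.nonneg y) k) (pow_le_one₀ (w.nonneg y) hy)

lemma gp_eval_le (hw : IsNonarchimedean w) {p : Polynomial L}
    (hc : ∀ m, w (p.coeff m) ≤ 1) {z : L} (hz : w z ≤ 1) : w (p.eval z) ≤ 1 := by
  rw [eval_eq_sum_range' (Nat.lt_succ_of_le (le_refl p.natDegree))]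
  refine nonarch_sum_le hw _ _ zero_le_one fun i _ => ?_
  rw [map_mul, map_pow]
  exact mul_le_one₀ (hc i) (pow_nonneg (w.nonneg z) i) (pow_le_one₀ (w.nonneg z) hz)

lemma hev_le_one (hw : IsNonarchimedean w) {p : Polynomial L}
    (hc : ∀ m, w (p.coeff m) ≤ 1) {n : ℕ} {x y : L} (hx : w x ≤ 1) (hy : w y ≤ 1) :
    w (hev p n x y) ≤ 1 := by
  refine nonarch_sum_le hw _ _ zero_le_one fun j _ => term_le_one (hc j) hx hy j (n-j)

lemma gp_hev_max (hw : IsNonarchimedean w) {P Q : Polynomial L} {n : ℕ}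
    (hgp : IsGoodPair w P Q n) {x y : L} (hxy : max (w x) (w y) = 1) :
    max (w (hev P n x y)) (w (hev Q n x y)) = 1 := by
  obtain ⟨hPd, hQd, hPc, hQc, hunit, hcomm, hinf⟩ := hgp
  have hx1 : w x ≤ 1 := le_trans (le_max_left _ _) hxy.le
  have hy1 : w y ≤ 1 := le_trans (le_max_right _ _) hxy.le
  have hub : max (w (hev P n x y)) (w (hev Q n x y)) ≤ 1 :=
    max_le (hev_le_one hw hPc hx1 hy1) (hev_le_one hw hQc hx1 hy1)
  refine le_antisymm hub ?_
  rcases eq_or_lt_of_le hy1 with hy | hy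
  · -- w y = 1
    have hyne : y ≠ 0 := by
      intro h; rw [h] at hy; simp at hy
    set z := x * y⁻¹ with hzdef
    have hz : w z ≤ 1 := by
      have hwz : w z = w x := by
        rw [hzdef, map_mul, map_inv₀, hy, inv_one, mul_one]
      rw [hwz]; exact hx1
    have hxz : x = y * z := by
      rw [hzdef, mul_comm x, ← mul_assoc, mul_inv_cancel₀ hyne, one_mul]
    have hP : hev P n x y = y^n * (P.eval z) := by
      have e : hev P n x y = hev P n (y*z) (y*1) := by rw [← hxz, mul_one]
      rw [e, hev_homog, hev_eval hPd]
    have hQ : hev Q n x y = y^n * (Q.eval z) := by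
      have e : hev Q n x y = hev Q n (y*z) (y*1) := by rw [← hxz, mul_one]
      rw [e, hev_homog, hev_eval hQd]
    have hyn : w (y^n) = 1 := by rw [map_pow, hy, one_pow]
    rcases not_and_or.mp (hcomm z hz) with h | h
    · push_neg at h
      refine le_trans h (le_trans ?_ (le_max_left _ _))
      rw [hP, map_mul, hyn, one_mul]
    · push_neg at h
      refine le_trans h (le_trans ?_ (le_max_right _ _))
      rw [hQ, map_mul, hyn, one_mul]
  · -- w y < 1, so w x = 1
    have hx : w x = 1 := by
      rcases max_cases (w x) (w y) with ⟨h1, _⟩ | ⟨h1, _⟩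
      · rw [← h1]; exact hxy
      · rw [h1] at hxy; rw [hxy] at hy; exact absurd hy (lt_irrefl 1)
    have hsplit : ∀ p : Polynomial L, hev p n x y
        = (∑ j ∈ Finset.range n, p.coeff j * x^j * y^(n-j)) + p.coeff n * x^n * y^(n-n) :=
      fun p => Finset.sum_range_succ _ n
    have htail : ∀ p : Polynomial L, (∀ m, w (p.coeff m) ≤ 1) →
        w (∑ j ∈ Finset.range n, p.coeff j * x^j * y^(n-j)) ≤ w y := by
      intro p hc
      refine nonarch_sum_le hw _ _ (w.nonneg y) fun j hj => ?_
      have hjn : j < n := Finset.mem_range.mp hj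
      rw [map_mul, map_mul, map_pow, map_pow]
      have h1 : w x ^ j ≤ 1 := pow_le_one₀ (w.nonneg x) hx1
      have h2 : w y ^ (n-j) ≤ w y := by
        calc w y ^ (n-j) ≤ w y ^ 1 :=
              pow_le_pow_of_le_one (w.nonneg y) hy1 (by omega)
          _ = w y := pow_one _
      calc w (p.coeff j) * w x ^ j * w y ^ (n-j)
          ≤ 1 * 1 * w y := by
            refine mul_le_mul (mul_le_mul (hc j) h1 (pow_nonneg (w.nonneg x) j) zero_le_one)
              h2 (pow_nonneg (w.nonneg y) (n-j)) (by norm_num)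
        _ = w y := by ring
    have hmain : ∀ p : Polynomial L, (∀ m, w (p.coeff m) ≤ 1) → w (p.coeff n) = 1 →
        w (hev p n x y) = 1 := by
      intro p hc hcn
      rw [hsplit p]
      have hterm : w (p.coeff n * x^n * y^(n-n)) = 1 := by
        simp [map_mul, map_pow, hcn, hx]
      have hlt : w (∑ j ∈ Finset.range n, p.coeff j * x^j * y^(n-j))
          < w (p.coeff n * x^n * y^(n-n)) := by
        rw [hterm]; exact lt_of_le_of_lt (htail p hc) hy
      rw [nonarch_add_eq hw hlt, hterm]
    rcases not_and_or.mp hinf with h | h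
    · have h1 : w (P.coeff n) = 1 := le_antisymm (hPc n) (not_lt.mp h)
      rw [hmain P hPc h1]
      exact le_max_left _ _
    · have h1 : w (Q.coeff n) = 1 := le_antisymm (hQc n) (not_lt.mp h)
      rw [hmain Q hQc h1]
      exact le_max_right _ _

lemma gp_hev_max_scaled (hw : IsNonarchimedean w) {P Q : Polynomial L} {n : ℕ}
    (hgp : IsGoodPair w P Q n) {x y : L} (hxy : ¬(x = 0 ∧ y = 0)) :
    max (w (hev P n x y)) (w (hev Q n x y)) = (max (w x) (w y))^n := by
  have hpos : 0 < max (w x) (w y) := by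
    rcases not_and_or.mp hxy with h | h
    · exact lt_max_of_lt_left (w.pos h)
    · exact lt_max_of_lt_right (w.pos h)
  obtain ⟨t, ht⟩ : ∃ t : L, w t = max (w x) (w y) := by
    rcases le_total (w x) (w y) with h | h
    · exact ⟨y, (max_eq_right h).symm⟩
    · exact ⟨x, (max_eq_left h).symm⟩
  have htne : t ≠ 0 := by
    intro h; rw [h] at ht; simp at ht; exact absurd ht.symm (ne_of_gt hpos)
  have hx' : x = t * (t⁻¹ * x) := by field_simp
  have hy' : y = t * (t⁻¹ * y) := by field_simp
  have hnorm : max (w (t⁻¹ * x)) (w (t⁻¹ * y)) = 1 := by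
    rw [map_mul, map_mul, map_inv₀, ← mul_max_of_nonneg _ _ (inv_nonneg.mpr (w.nonneg t)), ht]
    field_simp
  have hP : hev P n x y = t^n * hev P n (t⁻¹ * x) (t⁻¹ * y) := by
    conv_lhs => rw [hx', hy']
    exact hev_homog P n t _ _
  have hQ : hev Q n x y = t^n * hev Q n (t⁻¹ * x) (t⁻¹ * y) := by
    conv_lhs => rw [hx', hy']
    exact hev_homog Q n t _ _
  rw [hP, hQ, map_mul, map_mul, map_pow,
    ← mul_max_of_nonneg _ _ (pow_nonneg (w.nonneg t) n), gp_hev_max hw hgp hnorm, mul_one, ht]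

lemma exists_small_hev [IsAlgClosed L] {p : Polynomial L} {n : ℕ}
    (hn : 1 ≤ n) (hpd : p.natDegree ≤ n) (hc : ∀ m, w (p.coeff m) ≤ 1) :
    ∃ x y : L, max (w x) (w y) = 1 ∧ w (hev p n x y) < 1 := by
  by_cases hTop : w (p.coeff n) < 1
  · exact ⟨1, 0, by simp, by rwa [hev_at_10]⟩
  by_cases hBot : w (p.coeff 0) < 1
  · exact ⟨0, 1, by simp, by rwa [hev_at_01]⟩
  have hTop1 : w (p.coeff n) = 1 := le_antisymm (hc n) (not_lt.mp hTop)
  have hBot1 : w (p.coeff 0) = 1 := le_antisymm (hc 0) (not_lt.mp hBot)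
  have hcne : p.coeff n ≠ 0 := by
    intro h; rw [h] at hTop1; simp at hTop1
  have hdeg : p.natDegree = n := le_antisymm hpd (le_natDegree_of_ne_zero hcne)
  have hpne : p ≠ 0 := fun h => by simp [h] at hcne
  have hsplits : Splits p := IsAlgClosed.splits p
  have hcard : Multiset.card p.roots = n := by
    rw [splits_iff_card_roots.mp hsplits, hdeg]
  -- find a root of absolute value ≤ 1
  have hroot : ∃ r ∈ p.roots, w r ≤ 1 := by
    by_contra hall
    push_neg at hall
    have hprod : p = C p.leadingCoeff * (Multiset.map (fun a => X - C a) p.roots).prod :=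
      hsplits.eq_prod_roots
    have heval : p.coeff 0 = p.leadingCoeff * (Multiset.map (fun a => -a) p.roots).prod := by
      conv_lhs => rw [coeff_zero_eq_eval_zero, hprod]
      rw [eval_mul, eval_C, eval_multiset_prod, Multiset.map_map]
      refine congrArg _ (congrArg Multiset.prod (Multiset.map_congr rfl fun a _ => ?_))
      simp
    have hwlc : w p.leadingCoeff = 1 := by
      rw [← coeff_natDegree, hdeg]; exact hTop1
    have hwprod : w ((Multiset.map (fun a => -a) p.roots).prod)
        = ((p.roots.map (fun a => w a)).prod) := by
      rw [map_multiset_prod, Multiset.map_map]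
      refine congrArg Multiset.prod (Multiset.map_congr rfl fun a _ => ?_)
      simp [AbsoluteValue.map_neg]
    have hone : (p.roots.map (fun a => w a)).prod = 1 := by
      have := congrArg w heval
      rw [map_mul, hBot1, hwlc, one_mul, hwprod] at this
      exact this.symm
    have hne : p.roots ≠ 0 := by
      intro h
      rw [h] at hcard
      simp at hcard
      omega
    obtain ⟨r₀, hr₀⟩ := Multiset.exists_mem_of_ne_zero hne
    have hmem : w r₀ ∈ p.roots.map (fun a => w a) := Multiset.mem_map_of_mem _ hr₀
    have hge : ∀ u ∈ p.roots.map (fun a => w a), 1 ≤ u := by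
      intro u hu
      obtain ⟨r, hr, rfl⟩ := Multiset.mem_map.mp hu
      exact (hall r hr).le
    have := msprod_single_le hge hmem
    rw [hone] at this
    exact absurd (lt_of_lt_of_le (hall r₀ hr₀) this) (lt_irrefl 1)
  obtain ⟨r, hr, hr1⟩ := hroot
  refine ⟨r, 1, by rw [map_one]; exact max_eq_right hr1, ?_⟩
  rw [hev_eval hpd]
  have hz : p.eval r = 0 := (mem_roots hpne).mp hr
  rw [hz]
  simpa using zero_lt_one

end GoodPairMetric

section Fourier
variable {L : Type*} [Field L] {w : AbsoluteValue L ℝ}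

lemma real_pow_eq_one {x : ℝ} (hx : 0 ≤ x) {N : ℕ} (hN : N ≠ 0) (h : x^N = 1) : x = 1 := by
  rcases lt_trichotomy x 1 with h1 | h1 | h1
  · exact absurd h (by have := pow_lt_one₀ hx h1 hN; linarith)
  · exact h1
  · exact absurd h (by have := one_lt_pow₀ h1 hN; linarith)

/-- Fourier-inversion coefficient bound: if a polynomial maps the disk of radius
`w ρ` into itself, then `w (coeff n) * (w ρ)^n ≤ w ρ`. -/
lemma coeff_bound_of_maps_disk [IsAlgClosed L] (hw : IsNonarchimedean w)
    (h1 : ∀ k : ℕ, (k:L) ≠ 0 → w (k:L) = 1)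
    {p : Polynomial L} {ρ : L} (hρ : ρ ≠ 0)
    (hmap : ∀ z : L, w z ≤ w ρ → w (p.eval z) ≤ w ρ) (n : ℕ) :
    w (p.coeff n) * (w ρ)^n ≤ w ρ := by
  have hρpos : 0 < w ρ := w.pos hρ
  by_cases hn : p.natDegree < n
  · rw [coeff_eq_zero_of_natDegree_lt hn]
    simp [hρpos.le]
  push_neg at hn
  -- choose a prime N larger than natDegree and the characteristic
  obtain ⟨N, hNge, hNp⟩ := Nat.exists_infinite_primes (max p.natDegree (ringChar L) + 1)
  have hNd : p.natDegree < N := by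
    have := le_max_left p.natDegree (ringChar L); omega
  have hnN : n < N := lt_of_le_of_lt hn hNd
  have hNchar : ringChar L < N := by
    have := le_max_right p.natDegree (ringChar L); omega
  have hN0 : (N : L) ≠ 0 := by
    intro h
    have hdvd : ringChar L ∣ N := (CharP.cast_eq_zero_iff L (ringChar L) N).mp h
    rcases hNp.eq_one_or_self_of_dvd (ringChar L) hdvd with h' | h'
    · exact CharP.char_ne_one L (ringChar L) h'
    · omega
  haveI : NeZero (N : L) := ⟨hN0⟩
  have hNpos : 0 < N := hNp.pos
  -- a primitive N-th root of unity
  have htot : N.totient ≠ 0 := (Nat.totient_pos.mpr hNpos).ne'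
  have hdegcyc : (Polynomial.cyclotomic N L).degree ≠ 0 := by
    rw [Polynomial.degree_cyclotomic]
    exact_mod_cast htot
  obtain ⟨ω, hω⟩ := IsAlgClosed.exists_root _ hdegcyc
  have hprim : IsPrimitiveRoot ω N := (Polynomial.isRoot_cyclotomic_iff).mp hω
  have hωN : ω ^ N = 1 := hprim.pow_eq_one
  have hωne : ω ≠ 0 := by
    intro h
    rw [h, zero_pow hNpos.ne'] at hωN
    exact zero_ne_one hωN
  have hwω : w ω = 1 := by
    refine real_pow_eq_one (w.nonneg ω) hNpos.ne' ?_
    rw [← map_pow, hωN, map_one]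
  -- the Fourier sum
  have key : (∑ j ∈ Finset.range N, p.eval (ρ * ω^j) * (ω^j)^(N-n))
      = (N : L) * (p.coeff n * ρ^n) := by
    have hev : ∀ j, p.eval (ρ * ω^j)
        = ∑ m ∈ Finset.range N, p.coeff m * (ρ * ω^j)^m :=
      fun j => eval_eq_sum_range' hNd _
    calc (∑ j ∈ Finset.range N, p.eval (ρ * ω^j) * (ω^j)^(N-n))
        = ∑ j ∈ Finset.range N, ∑ m ∈ Finset.range N,
            p.coeff m * ρ^m * (ω^(m + (N-n)))^j := by
          refine Finset.sum_congr rfl fun j _ => ?_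
          rw [hev j, Finset.sum_mul]
          refine Finset.sum_congr rfl fun m _ => ?_
          have e1 : (ω^j)^m = (ω^m)^j := pow_right_comm ω j m
          have e2 : (ω^j)^(N-n) = (ω^(N-n))^j := pow_right_comm ω j (N-n)
          rw [mul_pow, e1, e2, pow_add, mul_pow]
          ring
      _ = ∑ m ∈ Finset.range N, p.coeff m * ρ^m
            * (∑ j ∈ Finset.range N, (ω^(m + (N-n)))^j) := by
          rw [Finset.sum_comm]
          refine Finset.sum_congr rfl fun m _ => by rw [Finset.mul_sum]
      _ = (N : L) * (p.coeff n * ρ^n) := by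
          have hval : ∀ m ∈ Finset.range N,
              p.coeff m * ρ^m * (∑ j ∈ Finset.range N, (ω^(m + (N-n)))^j)
              = if m = n then p.coeff n * ρ^n * (N:L) else 0 := by
            intro m hm
            have hmN : m < N := Finset.mem_range.mp hm
            by_cases hmn : m = n
            · subst hmn
              have : m + (N - m) = N := by omega
              rw [this, hωN]
              simp [Finset.sum_const, Finset.card_range]
            · have hξ : ω^(m + (N-n)) ≠ 1 := by
                intro hcon
                have hdvd : N ∣ m + (N - n) := (hprim.pow_eq_one_iff_dvd _).mp hcon
                obtain ⟨c, hc⟩ := hdvd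
                have hc2 : c < 2 := by
                  by_contra hge
                  push_neg at hge
                  have : N * 2 ≤ N * c := Nat.mul_le_mul_left N hge
                  omega
                have hc01 : c = 0 ∨ c = 1 := by omega
                rcases hc01 with rfl | rfl <;> omega
              rw [geom_sum_eq hξ]
              have : (ω^(m + (N-n)))^N - 1 = 0 := by
                rw [← pow_mul, mul_comm, pow_mul, hωN, one_pow, sub_self]
              rw [this, zero_div, mul_zero]
              simp [hmn]
          rw [Finset.sum_congr rfl hval, Finset.sum_ite_eq' (Finset.range N) n
            (fun _ => p.coeff n * ρ^n * (N:L))]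
          simp only [Finset.mem_range.mpr hnN, if_true]
          ring
  -- bound the sum
  have hbound : w (∑ j ∈ Finset.range N, p.eval (ρ * ω^j) * (ω^j)^(N-n)) ≤ w ρ := by
    refine nonarch_sum_le hw _ _ hρpos.le fun j _ => ?_
    rw [map_mul, map_pow, map_pow, hwω, one_pow, one_pow, mul_one]
    refine hmap _ ?_
    rw [map_mul, map_pow, hwω, one_pow, mul_one]
  rw [key, map_mul, map_mul, map_pow, h1 N hN0, one_mul] at hbound
  exact hbound

end Fourier

section LocalDisk
variable {L : Type*} [Field L] {w : AbsoluteValue L ℝ}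

lemma nonarch_sub_le (hw : IsNonarchimedean w) (a b : L) : w (a - b) ≤ max (w a) (w b) := by
  have h := hw a (-b)
  rw [← sub_eq_add_neg] at h
  simpa [AbsoluteValue.map_neg] using h

/-- The fundamental local lemma: a polynomial of degree `≥ 2` with potentially good
reduction admits an invariant disk centered at any point with bounded orbit, which
contains every point with bounded orbit. -/
lemma local_disk [IsAlgClosed L] (hw : IsNonarchimedean w)
    {ψ : Polynomial L} (hψd : 2 ≤ ψ.natDegree)
    (hpgr : HasPotentiallyGoodReduction w ψ)
    {α β : L}
    (hbα : ∃ M, ∀ n : ℕ, w ((fun t => ψ.eval t)^[n] α) ≤ M)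
    (hbβ : ∃ M, ∀ n : ℕ, w ((fun t => ψ.eval t)^[n] β) ≤ M) :
    ∃ ρ : L, ρ ≠ 0 ∧ w (β - α) ≤ w ρ ∧
      ∀ z : L, w (z - α) ≤ w ρ → w (ψ.eval z - α) ≤ w ρ := by
  obtain ⟨ma, mb, mc, md, hdet, c, hc0, hgp⟩ := hpgr
  obtain ⟨m, hm⟩ : ∃ m : ℕ, ψ.natDegree = m + 1 := ⟨ψ.natDegree - 1, by omega⟩
  have hm1 : 1 ≤ m := by omega
  set P := C c * conjNum ψ ma mb mc md with hP
  set Q := C c * conjDen ψ ma mb mc md with hQ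
  set ν := max (w mc) (w md) with hν
  set A := w (ma * md - mb * mc) with hA
  set k := w c with hk
  set T : L → ℝ := fun z => max (w (md*z - mb)) (w (ma - mc*z)) with hT
  have hδ0 : ma * md - mb * mc ≠ 0 := hdet
  have hApos : 0 < A := w.pos hδ0
  have hkpos : 0 < k := w.pos hc0
  have hνpos : 0 < ν := by
    by_contra hcon
    push_neg at hcon
    have hmc0 : mc = 0 := w.eq_zero.mp
      (le_antisymm (le_trans (le_max_left _ _) hcon) (w.nonneg mc))
    have hmd0 : md = 0 := w.eq_zero.mp
      (le_antisymm (le_trans (le_max_right _ _) hcon) (w.nonneg md))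
    exact hδ0 (by rw [hmc0, hmd0]; ring)
  have hTnn : ∀ v : L, 0 ≤ T v := fun v => le_trans (w.nonneg _) (le_max_left _ _)
  obtain ⟨hPd, hQd, hPc, hQc, hunit, hcomm, hinf⟩ := hgp
  have hgp' : IsGoodPair w P Q ψ.natDegree := ⟨hPd, hQd, hPc, hQc, hunit, hcomm, hinf⟩
  -- the key identity (A)
  have hIdA : ∀ x y : L, mc * hev P ψ.natDegree x y + md * hev Q ψ.natDegree x y
      = (c * (ma*md - mb*mc)) * (mc*x + md*y)^ψ.natDegree := by
    intro x y
    rw [hP, hQ, hev_C_mul, hev_C_mul]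
    have h3 := conj_cross ψ ma mb mc md x y
    calc mc * (c * hev (conjNum ψ ma mb mc md) ψ.natDegree x y)
          + md * (c * hev (conjDen ψ ma mb mc md) ψ.natDegree x y)
        = c * (mc * hev (conjNum ψ ma mb mc md) ψ.natDegree x y
            + md * hev (conjDen ψ ma mb mc md) ψ.natDegree x y) := by ring
      _ = c * ((ma*md - mb*mc) * (mc*x + md*y)^ψ.natDegree) := by rw [h3]
      _ = (c * (ma*md - mb*mc)) * (mc*x + md*y)^ψ.natDegree := by ring
  have hwcδ : w (c * (ma*md - mb*mc)) = k * A := map_mul w _ _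
  -- (E) + (F): the normalization identity  k·A·ν^m = 1
  have hEF : k * A * ν^m = 1 := by
    have hcross_le : ∀ x y : L, w x ≤ 1 → w y ≤ 1 → w (mc*x + md*y) ≤ ν := by
      intro x y hx hy
      refine le_trans (hw _ _) (max_le ?_ ?_)
      · rw [map_mul]
        calc w mc * w x ≤ ν * 1 := mul_le_mul (le_max_left _ _) hx (w.nonneg x) hνpos.le
          _ = ν := mul_one ν
      · rw [map_mul]
        calc w md * w y ≤ ν * 1 := mul_le_mul (le_max_right _ _) hy (w.nonneg y) hνpos.le
          _ = ν := mul_one ν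
    have hle : k * A * ν^m ≤ 1 := by
      obtain ⟨x₀, y₀, hxy₀max, hxy₀cross⟩ :
          ∃ x₀ y₀ : L, max (w x₀) (w y₀) = 1 ∧ w (mc*x₀ + md*y₀) = ν := by
        rcases le_total (w mc) (w md) with h | h
        · refine ⟨0, 1, by simp, ?_⟩
          simp only [mul_zero, mul_one, zero_add]
          rw [hν]
          exact (max_eq_right h).symm
        · refine ⟨1, 0, by simp, ?_⟩
          simp only [mul_zero, mul_one, add_zero]
          rw [hν]
          exact (max_eq_left h).symm
      have hx1 : w x₀ ≤ 1 := le_trans (le_max_left _ _) hxy₀max.le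
      have hy1 : w y₀ ≤ 1 := le_trans (le_max_right _ _) hxy₀max.le
      have h1 : w (mc * hev P ψ.natDegree x₀ y₀ + md * hev Q ψ.natDegree x₀ y₀) ≤ ν := by
        refine le_trans (hw _ _) (max_le ?_ ?_)
        · rw [map_mul]
          calc w mc * w (hev P ψ.natDegree x₀ y₀) ≤ ν * 1 :=
                mul_le_mul (le_max_left _ _) (hev_le_one hw hPc hx1 hy1)
                  (w.nonneg _) hνpos.le
            _ = ν := mul_one ν
        · rw [map_mul]
          calc w md * w (hev Q ψ.natDegree x₀ y₀) ≤ ν * 1 :=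
                mul_le_mul (le_max_right _ _) (hev_le_one hw hQc hx1 hy1)
                  (w.nonneg _) hνpos.le
            _ = ν := mul_one ν
      rw [hIdA x₀ y₀, map_mul, hwcδ, map_pow, hxy₀cross, hm, pow_succ, ← mul_assoc] at h1
      have h2 : k * A * ν^m * ν ≤ 1 * ν := by rw [one_mul]; exact h1
      exact (mul_le_mul_iff_left₀ hνpos).mp h2
    have hge : 1 ≤ k * A * ν^m := by
      by_contra hlt
      push_neg at hlt
      -- a point where one of P, Q is small and the other is a unit
      have hfinal : ∀ x₁ y₁ : L, max (w x₁) (w y₁) = 1 →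
          w (mc * hev P ψ.natDegree x₁ y₁ + md * hev Q ψ.natDegree x₁ y₁) = ν → False := by
        intro x₁ y₁ hmax1 hsum
        have hx1 : w x₁ ≤ 1 := le_trans (le_max_left _ _) hmax1.le
        have hy1 : w y₁ ≤ 1 := le_trans (le_max_right _ _) hmax1.le
        have hup : w (mc * hev P ψ.natDegree x₁ y₁ + md * hev Q ψ.natDegree x₁ y₁) < ν := by
          rw [hIdA x₁ y₁, map_mul, hwcδ, map_pow]
          have hcr : w (mc*x₁ + md*y₁) ≤ ν := hcross_le x₁ y₁ hx1 hy1
          calc k * A * w (mc*x₁ + md*y₁) ^ ψ.natDegree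
              ≤ k * A * ν ^ ψ.natDegree := by
                refine mul_le_mul_of_nonneg_left ?_ (by positivity)
                exact pow_le_pow_left₀ (w.nonneg _) hcr _
            _ = (k * A * ν^m) * ν := by rw [hm, pow_succ]; ring
            _ < 1 * ν := by exact (mul_lt_mul_iff_left₀ hνpos).mpr hlt
            _ = ν := one_mul ν
        rw [hsum] at hup
        exact absurd hup (lt_irrefl ν)
      rcases le_total (w mc) (w md) with hcase | hcase
      · -- ν = w md : make P small
        have hνmd : w md = ν := by rw [hν]; exact (max_eq_right hcase).symm
        obtain ⟨x₁, y₁, hmax1, hsmall⟩ :=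
          exists_small_hev (w := w) (p := P) (n := ψ.natDegree) (by omega) hPd hPc
        have hother : w (hev Q ψ.natDegree x₁ y₁) = 1 := by
          have hmx := gp_hev_max hw hgp' hmax1
          rcases max_cases (w (hev P ψ.natDegree x₁ y₁)) (w (hev Q ψ.natDegree x₁ y₁))
            with ⟨h1, _⟩ | ⟨h1, _⟩
          · rw [h1] at hmx; rw [hmx] at hsmall; exact absurd hsmall (lt_irrefl 1)
          · rw [h1] at hmx; exact hmx
        refine hfinal x₁ y₁ hmax1 ?_
        have hB : w (md * hev Q ψ.natDegree x₁ y₁) = ν := by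
          rw [map_mul, hother, mul_one, hνmd]
        have hA' : w (mc * hev P ψ.natDegree x₁ y₁) < ν := by
          rw [map_mul]
          rcases eq_or_lt_of_le (w.nonneg mc) with h0 | h0
          · rw [← h0, zero_mul]; exact hνpos
          · calc w mc * w (hev P ψ.natDegree x₁ y₁) < w mc * 1 :=
                  (mul_lt_mul_iff_right₀ h0).mpr hsmall
              _ = w mc := mul_one _
              _ ≤ ν := le_max_left _ _
        rw [nonarch_add_eq hw (by rw [hB]; exact hA')]
        exact hB
      · -- ν = w mc : make Q small
        have hνmc : w mc = ν := by rw [hν]; exact (max_eq_left hcase).symm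
        obtain ⟨x₁, y₁, hmax1, hsmall⟩ :=
          exists_small_hev (w := w) (p := Q) (n := ψ.natDegree) (by omega) hQd hQc
        have hother : w (hev P ψ.natDegree x₁ y₁) = 1 := by
          have hmx := gp_hev_max hw hgp' hmax1
          rcases max_cases (w (hev P ψ.natDegree x₁ y₁)) (w (hev Q ψ.natDegree x₁ y₁))
            with ⟨h1, _⟩ | ⟨h1, _⟩
          · rw [h1] at hmx; exact hmx
          · rw [h1] at hmx; rw [hmx] at hsmall; exact absurd hsmall (lt_irrefl 1)
        refine hfinal x₁ y₁ hmax1 ?_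
        have hB : w (mc * hev P ψ.natDegree x₁ y₁) = ν := by
          rw [map_mul, hother, mul_one, hνmc]
        have hA' : w (md * hev Q ψ.natDegree x₁ y₁) < ν := by
          rw [map_mul]
          rcases eq_or_lt_of_le (w.nonneg md) with h0 | h0
          · rw [← h0, zero_mul]; exact hνpos
          · calc w md * w (hev Q ψ.natDegree x₁ y₁) < w md * 1 :=
                  (mul_lt_mul_iff_right₀ h0).mpr hsmall
              _ = w md := mul_one _
              _ ≤ ν := le_max_right _ _
        rw [add_comm, nonarch_add_eq hw (by rw [hB]; exact hA')]
        exact hB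
    exact le_antisymm hle hge
  -- the exact functional equation for T
  have hTmap : ∀ z : L, T (ψ.eval z) * (k * A^(m+1)) = (T z)^(m+1) := by
    intro z
    have hxyne : ¬((md*z - mb) = 0 ∧ (ma - mc*z) = 0) := by
      rintro ⟨h1, h2⟩
      apply hδ0
      have e : ma*md - mb*mc = (ma - mc*z)*md + (md*z - mb)*mc := by ring
      rw [e, h1, h2]; ring
    have hscaled := gp_hev_max_scaled hw hgp' (x := md*z - mb) (y := ma - mc*z) hxyne
    have hPe : hev P ψ.natDegree (md*z - mb) (ma - mc*z)
        = c * ((ma*md - mb*mc)^ψ.natDegree * (md * ψ.eval z - mb)) := by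
      rw [hP, hev_C_mul, (conj_special ψ ma mb mc md z).1]
    have hQe : hev Q ψ.natDegree (md*z - mb) (ma - mc*z)
        = c * ((ma*md - mb*mc)^ψ.natDegree * (ma - mc * ψ.eval z)) := by
      rw [hQ, hev_C_mul, (conj_special ψ ma mb mc md z).2]
    rw [hPe, hQe] at hscaled
    have e1 : w (c * ((ma*md - mb*mc)^ψ.natDegree * (md * ψ.eval z - mb)))
        = (k * A^ψ.natDegree) * w (md * ψ.eval z - mb) := by
      rw [map_mul, map_mul, map_pow]; ring
    have e2 : w (c * ((ma*md - mb*mc)^ψ.natDegree * (ma - mc * ψ.eval z)))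
        = (k * A^ψ.natDegree) * w (ma - mc * ψ.eval z) := by
      rw [map_mul, map_mul, map_pow]; ring
    rw [e1, e2, ← mul_max_of_nonneg _ _ (by positivity : (0:ℝ) ≤ k * A^ψ.natDegree)]
      at hscaled
    rw [← hm]
    calc T (ψ.eval z) * (k * A^ψ.natDegree)
        = (k * A^ψ.natDegree) * max (w (md * ψ.eval z - mb)) (w (ma - mc * ψ.eval z)) := by
          rw [hT]; ring
      _ = (T z)^ψ.natDegree := hscaled
  -- lower bound (G2)
  have hG2 : ∀ z : L, A ≤ ν * T z := by
    intro z
    have hid : ma*md - mb*mc = mc*(md*z - mb) + md*(ma - mc*z) := by ring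
    calc A = w (mc*(md*z - mb) + md*(ma - mc*z)) := by rw [hA]; exact congrArg w hid
      _ ≤ max (w (mc*(md*z - mb))) (w (md*(ma - mc*z))) := hw _ _
      _ ≤ ν * T z := by
          refine max_le ?_ ?_
          · rw [map_mul]
            exact mul_le_mul (le_max_left _ _) (le_max_left _ _) (w.nonneg _) hνpos.le
          · rw [map_mul]
            exact mul_le_mul (le_max_right _ _) (le_max_right _ _) (w.nonneg _) hνpos.le
  -- bounded orbit forces T z to be minimal
  have horb : ∀ z : L, (∃ M, ∀ n : ℕ, w ((fun t => ψ.eval t)^[n] z) ≤ M) →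
      ν * T z = A := by
    rintro z ⟨M0, hM0⟩
    set M := max M0 0 with hM
    have hMnn : 0 ≤ M := le_max_right _ _
    have hMb : ∀ n : ℕ, w ((fun t => ψ.eval t)^[n] z) ≤ M :=
      fun n => le_trans (hM0 n) (le_max_left _ _)
    set C₁ := max (max (w md * M) (w mb)) (max (w ma) (w mc * M)) with hC₁
    have hTb : ∀ n : ℕ, T ((fun t => ψ.eval t)^[n] z) ≤ C₁ := by
      intro n
      set t := (fun t => ψ.eval t)^[n] z with ht
      refine max_le ?_ ?_
      · refine le_trans (nonarch_sub_le hw _ _) (le_trans (max_le ?_ ?_) (le_max_left _ _))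
        · rw [map_mul]
          exact le_trans (mul_le_mul_of_nonneg_left (hMb n) (w.nonneg md)) (le_max_left _ _)
        · exact le_max_right _ _
      · refine le_trans (nonarch_sub_le hw _ _) (le_trans (max_le ?_ ?_) (le_max_right _ _))
        · exact le_max_left _ _
        · rw [map_mul]
          exact le_trans (mul_le_mul_of_nonneg_left (hMb n) (w.nonneg mc)) (le_max_right _ _)
    refine le_antisymm ?_ (hG2 z)
    by_contra hgt
    push_neg at hgt
    set u : ℕ → ℝ := fun n => ν * T ((fun t => ψ.eval t)^[n] z) / A with hu
    have hu1 : ∀ n, 1 ≤ u n := fun n => (one_le_div hApos).mpr (hG2 _)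
    have huD : ∀ n, u (n+1) = (u n)^(m+1) := by
      intro n
      set t := (fun t => ψ.eval t)^[n] z with ht
      have hit : (fun t => ψ.eval t)^[n+1] z = ψ.eval t := by
        rw [Function.iterate_succ_apply']
      have h := hTmap t
      have hne : k * ν^m ≠ 0 := by positivity
      rw [hu]
      simp only [hit]
      rw [div_pow, div_eq_div_iff hApos.ne' (by positivity : (A:ℝ)^(m+1) ≠ 0)]
      apply mul_right_cancel₀ hne
      calc (ν * T (ψ.eval t) * A^(m+1)) * (k * ν^m)
          = (T (ψ.eval t) * (k * A^(m+1))) * ν^(m+1) := by ring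
        _ = (T t)^(m+1) * ν^(m+1) := by rw [h]
        _ = (ν * T t)^(m+1) * (k * A * ν^m) := by rw [mul_pow, hEF, mul_one]; ring
        _ = ((ν * T t)^(m+1) * A) * (k * ν^m) := by ring
    have hupow : ∀ n, u n = (u 0)^((m+1)^n) := by
      intro n
      induction n with
      | zero => simp
      | succ j ih => rw [huD j, ih, ← pow_mul, ← pow_succ]
    have hu0 : 1 < u 0 := by
      rw [hu]
      simp only [Function.iterate_zero_apply]
      exact (one_lt_div hApos).mpr hgt
    have hubd : ∀ n, u n ≤ ν * C₁ / A := by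
      intro n
      rw [hu]
      refine (div_le_div_iff_of_pos_right hApos).mpr ?_
      exact mul_le_mul_of_nonneg_left (hTb n) hνpos.le
    obtain ⟨n, hn⟩ := pow_unbounded_of_one_lt (ν * C₁ / A) hu0
    have hexp : n ≤ (m+1)^n := (Nat.lt_pow_self (n := n) (by omega : 1 < m + 1)).le
    have hmono : u 0 ^ n ≤ u 0 ^ ((m+1)^n) := pow_le_pow_right₀ hu0.le hexp
    rw [← hupow n] at hmono
    have := lt_of_lt_of_le hn (le_trans hmono (hubd n))
    exact absurd this (lt_irrefl _)
  have hTα : ν * T α = A := horb α hbα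
  have hTβ : ν * T β = A := horb β hbβ
  -- the invariant disk: radius A/ν², i.e. w ρ with ρ := δ/m₀²
  obtain ⟨m₀, hm₀⟩ : ∃ m₀ : L, w m₀ = ν := by
    rcases le_total (w mc) (w md) with h | h
    · exact ⟨md, by rw [hν]; exact (max_eq_right h).symm⟩
    · exact ⟨mc, by rw [hν]; exact (max_eq_left h).symm⟩
  have hm₀0 : m₀ ≠ 0 := by
    intro h; rw [h, map_zero] at hm₀; exact absurd hm₀.symm hνpos.ne'
  -- a helper: any point with minimal T is within the disk around α
  have hclose : ∀ v : L, ν * T v = A → w (v - α) ≤ A * (ν*ν)⁻¹ := by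
    intro v hTv
    have hid : (ma*md - mb*mc) * (v - α)
        = (md*v - mb)*(ma - mc*α) - (md*α - mb)*(ma - mc*v) := by ring
    have h1 : A * w (v - α) ≤ T v * T α := by
      rw [hA, ← map_mul, hid]
      refine le_trans (nonarch_sub_le hw _ _) (max_le ?_ ?_)
      · rw [map_mul]
        exact mul_le_mul (le_max_left _ _) (le_max_right _ _) (w.nonneg _) (hTnn v)
      · rw [map_mul]
        calc w (md*α - mb) * w (ma - mc*v) ≤ T α * T v :=
              mul_le_mul (le_max_left _ _) (le_max_right _ _) (w.nonneg _) (hTnn α)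
          _ = T v * T α := mul_comm _ _
    rw [← div_eq_mul_inv, le_div_iff₀ (by positivity : (0:ℝ) < ν*ν)]
    have h2 : A * (w (v - α) * (ν*ν)) ≤ A * A := by
      calc A * (w (v - α) * (ν*ν)) = (A * w (v - α)) * (ν*ν) := by ring
        _ ≤ (T v * T α) * (ν*ν) := mul_le_mul_of_nonneg_right h1 (by positivity)
        _ = (ν * T v) * (ν * T α) := by ring
        _ = A * A := by rw [hTv, hTα]
    exact le_of_mul_le_mul_left h2 hApos
  refine ⟨(ma*md - mb*mc) * (m₀ * m₀)⁻¹,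
    mul_ne_zero hδ0 (inv_ne_zero (mul_ne_zero hm₀0 hm₀0)), ?_, ?_⟩
    <;> rw [map_mul, map_inv₀, map_mul, hm₀, ← hA]
  · -- β is in the disk
    exact hclose β hTβ
  · -- invariance of the disk
    intro z hz
    have hTz : ν * T z = A := by
      refine le_antisymm ?_ (hG2 z)
      have hb1 : w (md*z - mb) ≤ A * ν⁻¹ := by
        have e : md*z - mb = md*(z - α) + (md*α - mb) := by ring
        rw [e]
        refine le_trans (hw _ _) (max_le ?_ ?_)
        · rw [map_mul]
          calc w md * w (z - α) ≤ ν * (A * (ν*ν)⁻¹) :=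
                mul_le_mul (le_max_right _ _) hz (w.nonneg _) hνpos.le
            _ = A * ν⁻¹ := by field_simp
        · calc w (md*α - mb) ≤ T α := le_max_left _ _
            _ = A * ν⁻¹ := by
                rw [eq_mul_inv_iff_mul_eq₀ hνpos.ne']
                rw [mul_comm] at hTα
                exact hTα
      have hb2 : w (ma - mc*z) ≤ A * ν⁻¹ := by
        have e : ma - mc*z = (ma - mc*α) - mc*(z - α) := by ring
        rw [e]
        refine le_trans (nonarch_sub_le hw _ _) (max_le ?_ ?_)
        · calc w (ma - mc*α) ≤ T α := le_max_right _ _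
            _ = A * ν⁻¹ := by
                rw [eq_mul_inv_iff_mul_eq₀ hνpos.ne']
                rw [mul_comm] at hTα
                exact hTα
        · rw [map_mul]
          calc w mc * w (z - α) ≤ ν * (A * (ν*ν)⁻¹) :=
                mul_le_mul (le_max_left _ _) hz (w.nonneg _) hνpos.le
            _ = A * ν⁻¹ := by field_simp
      calc ν * T z ≤ ν * (A * ν⁻¹) :=
            mul_le_mul_of_nonneg_left (max_le hb1 hb2) hνpos.le
        _ = A := by field_simp
    have hTev : ν * T (ψ.eval z) = A := by
      have h := hTmap z
      have hTz' : T z = A / ν := by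
        rw [eq_div_iff hνpos.ne', mul_comm]
        exact hTz
      rw [hTz'] at h
      have hne : k * A^(m+1) * ν^m ≠ 0 := by positivity
      apply mul_right_cancel₀ hne
      calc (ν * T (ψ.eval z)) * (k * A^(m+1) * ν^m)
          = (T (ψ.eval z) * (k * A^(m+1))) * ν^(m+1) := by ring
        _ = (A/ν)^(m+1) * ν^(m+1) := by rw [h]
        _ = A^(m+1) := by
            rw [div_pow]
            field_simp
        _ = A * (k * A^(m+1) * ν^m) := by
            calc A^(m+1) = A^(m+1) * (k * A * ν^m) := by rw [hEF, mul_one]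
              _ = A * (k * A^(m+1) * ν^m) := by ring
    exact hclose (ψ.eval z) hTev

end LocalDisk

section GlobalHelpers
variable {K : Type*} [Field K]

lemma psi_natDegree_le (φ : Polynomial K) (a b : K) :
    (C a⁻¹ * (φ.comp (C a * X + C b) - C b)).natDegree ≤ φ.natDegree := by
  refine le_trans natDegree_mul_le ?_
  rw [natDegree_C, zero_add]
  refine le_trans (natDegree_sub_le _ _) (max_le ?_ ?_)
  · refine le_trans natDegree_comp.le ?_
    calc φ.natDegree * (C a * X + C b).natDegree ≤ φ.natDegree * 1 :=
      Nat.mul_le_mul le_rfl natDegree_linear_le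
    _ = φ.natDegree := by omega
  · rw [natDegree_C]; omega

lemma psi_coeff_top (φ : Polynomial K) {a : K} (ha : a ≠ 0) (b : K)
    (hd : 1 ≤ φ.natDegree) :
    (C a⁻¹ * (φ.comp (C a * X + C b) - C b)).coeff φ.natDegree
      = a⁻¹ * (φ.leadingCoeff * a ^ φ.natDegree) := by
  rw [coeff_C_mul, coeff_sub, coeff_C, if_neg (by omega), sub_zero]
  have hγ : (C a * X + C b).natDegree = 1 := natDegree_linear ha
  have hcompdeg : (φ.comp (C a * X + C b)).natDegree = φ.natDegree := by
    rw [natDegree_comp, hγ, mul_one]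
  have e : (φ.comp (C a * X + C b)).coeff φ.natDegree
      = (φ.comp (C a * X + C b)).leadingCoeff := by
    rw [← coeff_natDegree, hcompdeg]
  rw [e, leadingCoeff_comp (by rw [hγ]; omega), leadingCoeff_linear ha]

lemma psi_map {L : Type*} [Field L] (emb : K →+* L) (φ : Polynomial K) (a b : K) :
    (C a⁻¹ * (φ.comp (C a * X + C b) - C b)).map emb
      = C (emb a)⁻¹ * ((φ.map emb).comp (C (emb a) * X + C (emb b)) - C (emb b)) := by
  rw [Polynomial.map_mul, Polynomial.map_sub, Polynomial.map_comp]
  simp [map_inv₀]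

lemma conjNum_affine {L : Type*} [Field L] (ψ : Polynomial L) (A B : L) :
    conjNum ψ A B 0 1 = ψ.comp (C A * X + C B) - C B := by
  unfold conjNum
  simp only [C_0, C_1, zero_mul, zero_add, one_pow, mul_one, one_mul]
  congr 1
  exact (eval₂_eq_sum_range C (C A * X + C B)).symm

lemma conjDen_affine {L : Type*} [Field L] (ψ : Polynomial L) (A B : L) :
    conjDen ψ A B 0 1 = C A := by
  unfold conjDen
  simp only [C_0, C_1, zero_mul, zero_add, one_pow, mul_one, one_mul, sub_zero]

lemma abs_rigid {ι : Type*} (absv : ι → AbsoluteValue K ℝ)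
    (hfin : ∀ x : K, x ≠ 0 → (Function.mulSupport fun i => absv i x).Finite)
    (hprod : ∀ x : K, x ≠ 0 → ∏ᶠ i, absv i x = 1)
    {x : K} (hx : x ≠ 0) (hle : ∀ i, absv i x ≤ 1) (i : ι) : absv i x = 1 := by
  classical
  by_contra hne
  have hlt : absv i x < 1 := lt_of_le_of_ne (hle i) hne
  set s := (hfin x hx).toFinset ∪ {i} with hs
  have hsub : (Function.mulSupport fun j => absv j x) ⊆ ↑s := by
    intro j hj
    simp only [hs, Finset.coe_union, Set.mem_union, Finset.coe_singleton,
      Set.mem_singleton_iff, Set.Finite.coe_toFinset]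
    exact Or.inl hj
  have hp := hprod x hx
  rw [finprod_eq_prod_of_mulSupport_subset _ hsub] at hp
  have hmem : i ∈ s := by simp [hs]
  rw [← Finset.mul_prod_erase s _ hmem] at hp
  have h2 : ∏ j ∈ s.erase i, absv j x ≤ 1 :=
    Finset.prod_le_one (fun j _ => (absv j).nonneg x) (fun j _ => hle j)
  have h4 : absv i x * ∏ j ∈ s.erase i, absv j x ≤ absv i x :=
    mul_le_of_le_one_right ((absv i).nonneg x) h2
  linarith

end GlobalHelpers

/-- Proposition 5.1: Let `F` be an arbitrary field, `K` a finite extension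
of `F(T)`, and `φ ∈ K[z]` a polynomial of degree `d ≥ 2`.  Suppose there are at least
three points of `P^1(K)` of canonical height zero.  Then there is a `K`-rational affine
change of coordinates `γ(z) = a z + b` with all coefficients of `γ⁻¹ ∘ φ ∘ γ` in the
constant field `F_K` if and only if `φ`, viewed over `C_v`, has potentially good
reduction at every place `v ∈ M_K`. -/
theorem isotrivial_iff_potentially_good_reduction_everywhere
    {F K : Type*} [Field F] [Field K] [Algebra F K]
    [Algebra (RatFunc F) K] [IsScalarTower F (RatFunc F) K]
    [FiniteDimensional (RatFunc F) K]
    {ι : Type*} (absv : ι → AbsoluteValue K ℝ)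
    (hna : ∀ i, IsNonarchimedean (absv i))
    (hnt : ∀ i, ∃ x : K, x ≠ 0 ∧ absv i x ≠ 1)
    (hineq : ∀ i j : ι, (∀ x : K, absv i x < 1 ↔ absv j x < 1) → i = j)
    (hfin : ∀ x : K, x ≠ 0 → (Function.mulSupport fun i => absv i x).Finite)
    (hprod : ∀ x : K, x ≠ 0 → ∏ᶠ i, absv i x = 1)
    -- the constant field `F_K` consists exactly of the elements of absolute value 1
    -- at every place (together with 0)
    (hconst : ∀ x : K, x ≠ 0 → ((∀ i, absv i x = 1) ↔ IsAlgebraic F x))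
    -- the local fields `C_v`: complete, algebraically closed, non-archimedean
    -- extensions of `(K, |·|_v)`
    (Cv : ι → Type*) [∀ i, Field (Cv i)] [∀ i, IsAlgClosed (Cv i)]
    (emb : ∀ i, K →+* Cv i) (vC : ∀ i, AbsoluteValue (Cv i) ℝ)
    (hext : ∀ i (x : K), vC i (emb i x) = absv i x)
    (hnaC : ∀ i, IsNonarchimedean (vC i))
    (hcompC : ∀ i, SeqComplete (vC i))
    (φ : Polynomial K) (d : ℕ) (hdeg : φ.natDegree = d) (hd : 2 ≤ d)
    -- `hhat` is the canonical height of Call–Silverman: the unique function with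
    -- `hhat (φ x) = d * hhat x` which differs boundedly from the Weil height
    (hhat : Option K → ℝ)
    (hhat_fe : ∀ x : Option K, hhat (polyMap φ x) = (d : ℝ) * hhat x)
    (hhat_bd : ∃ C : ℝ, ∀ x : Option K, |hhat x - weilHt absv x| ≤ C)
    -- there are at least three points of `P^1(K)` of canonical height zero
    (h3 : ∃ x y z : Option K, x ≠ y ∧ x ≠ z ∧ y ≠ z ∧
      hhat x = 0 ∧ hhat y = 0 ∧ hhat z = 0) :
    (∃ a b : K, a ≠ 0 ∧ ∀ n : ℕ,
        IsAlgebraic F ((C a⁻¹ * (φ.comp (C a * X + C b) - C b)).coeff n)) ↔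
      (∀ i : ι, HasPotentiallyGoodReduction (vC i) (φ.map (emb i))) := by

  have hφ0 : φ ≠ 0 := by
    intro h
    rw [h, natDegree_zero] at hdeg
    omega
  have habs1 : ∀ (i : ι) (x : K), x ≠ 0 → IsAlgebraic F x → vC i (emb i x) = 1 := by
    intro i x hx hxalg
    rw [hext]
    exact (hconst x hx).mpr hxalg i
  constructor
  · -- isotrivial ⇒ potentially good reduction everywhere
    rintro ⟨a, b, ha, halg⟩ i
    have hinj : Function.Injective (emb i) := (emb i).injective
    have hDmap : (φ.map (emb i)).natDegree = φ.natDegree :=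
      natDegree_map_eq_of_injective hinj φ
    set A0 := emb i a with hA0d
    set B0 := emb i b with hB0d
    have hA00 : A0 ≠ 0 := by
      intro h
      exact ha (hinj (by rw [map_zero]; exact h))
    refine ⟨A0, B0, 0, 1, by simpa using hA00, ?_⟩
    rw [conjNum_affine, conjDen_affine]
    refine ⟨A0⁻¹, inv_ne_zero hA00, ?_⟩
    have hQ1 : C A0⁻¹ * C A0 = 1 := by rw [← C_mul, inv_mul_cancel₀ hA00, C_1]
    set ψK := C a⁻¹ * (φ.comp (C a * X + C b) - C b) with hψKd
    have hPmap : C A0⁻¹ * ((φ.map (emb i)).comp (C A0 * X + C B0) - C B0)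
        = ψK.map (emb i) := (psi_map (emb i) φ a b).symm
    rw [hQ1, hPmap]
    have hcoeffs : ∀ m : ℕ, vC i ((ψK.map (emb i)).coeff m) ≤ 1 := by
      intro m
      rw [coeff_map]
      by_cases h0 : ψK.coeff m = 0
      · rw [h0, map_zero, map_zero]; norm_num
      · rw [habs1 i _ h0 (halg m)]
    have htopne : ψK.coeff φ.natDegree ≠ 0 := by
      rw [hψKd, psi_coeff_top φ ha b (by omega)]
      exact mul_ne_zero (inv_ne_zero ha)
        (mul_ne_zero (leadingCoeff_ne_zero.mpr hφ0) (pow_ne_zero _ ha))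
    have htop1 : vC i ((ψK.map (emb i)).coeff (φ.map (emb i)).natDegree) = 1 := by
      rw [hDmap, coeff_map]
      exact habs1 i _ htopne (halg φ.natDegree)
    refine ⟨?_, ?_, hcoeffs, ?_, ?_, ?_, ?_⟩
    · rw [hDmap]
      exact le_trans natDegree_map_le (psi_natDegree_le φ a b)
    · simp
    · intro m
      rcases Nat.eq_zero_or_pos m with rfl | hm
      · simp
      · rw [coeff_one, if_neg (by omega)]
        simp
    · exact Or.inr ⟨0, by simp⟩
    · intro z hz hcontr
      rw [eval_one, map_one] at hcontr
      exact absurd hcontr.2 (by norm_num)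
    · intro hcontr
      rw [htop1] at hcontr
      exact absurd hcontr.1 (by norm_num)
  · -- potentially good reduction everywhere ⇒ isotrivial
    intro hb
    obtain ⟨x, y, z, hxy, hxz, hyz, hx0, hy0, hz0⟩ := h3
    have hpair : ∃ α β : K, α ≠ β ∧ hhat (some α) = 0 ∧ hhat (some β) = 0 := by
      rcases x with _ | xv <;> rcases y with _ | yv <;> rcases z with _ | zv <;>
        first
          | exact absurd rfl hxy
          | exact absurd rfl hxz
          | exact absurd rfl hyz
          | exact ⟨yv, zv, fun h => hyz (by rw [h]), hy0, hz0⟩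
          | exact ⟨xv, zv, fun h => hxz (by rw [h]), hx0, hz0⟩
          | exact ⟨xv, yv, fun h => hxy (by rw [h]), hx0, hy0⟩
    obtain ⟨α, β, hαβ, hα0, hβ0⟩ := hpair
    set a := β - α with had
    have ha : a ≠ 0 := sub_ne_zero.mpr (Ne.symm hαβ)
    refine ⟨a, α, ha, ?_⟩
    set ψK := C a⁻¹ * (φ.comp (C a * X + C α) - C α) with hψKd
    -- bounded orbits at every place
    have horbK : ∀ γ : K, hhat (some γ) = 0 → ∀ i : ι, ∃ M : ℝ, ∀ n : ℕ,
        absv i ((fun t => φ.eval t)^[n] γ) ≤ M := by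
      intro γ hγ0 i
      obtain ⟨Cb, hCb⟩ := hhat_bd
      refine ⟨Real.exp Cb, fun n => ?_⟩
      have hiter : ∀ n : ℕ, (polyMap φ)^[n] (some γ) = some ((fun t => φ.eval t)^[n] γ) := by
        intro n
        induction n with
        | zero => rfl
        | succ j ih =>
            rw [Function.iterate_succ_apply', ih, Function.iterate_succ_apply']
            rfl
      have hhat0 : ∀ n : ℕ, hhat ((polyMap φ)^[n] (some γ)) = 0 := by
        intro n
        induction n with
        | zero => exact hγ0
        | succ j ih => rw [Function.iterate_succ_apply', hhat_fe, ih, mul_zero]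
      set t := (fun t => φ.eval t)^[n] γ with htd
      have hht : hhat (some t) = 0 := by rw [← hiter n]; exact hhat0 n
      have hweil : weilHt absv (some t) ≤ Cb := by
        have h := hCb (some t)
        rw [hht, zero_sub, abs_neg] at h
        exact le_trans (le_abs_self _) h
      by_cases ht0 : t = 0
      · rw [ht0, map_zero]
        exact (Real.exp_pos Cb).le
      · have hsupfin : (Function.support fun j => Real.log (max (absv j t) 1)).Finite := by
          refine Set.Finite.subset (hfin t ht0) ?_
          intro j hj
          simp only [Function.mem_support] at hj
          simp only [Function.mem_mulSupport]
          intro hone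
          apply hj
          rw [hone, max_self, Real.log_one]
        have hnn : ∀ j, 0 ≤ Real.log (max (absv j t) 1) :=
          fun j => Real.log_nonneg (le_max_right _ _)
        have hsingle : Real.log (max (absv i t) 1) ≤ weilHt absv (some t) := by
          have h := single_le_finsum i hsupfin hnn
          simpa [weilHt] using h
        have hpos : 0 < max (absv i t) 1 := lt_of_lt_of_le one_pos (le_max_right _ _)
        calc absv i t ≤ max (absv i t) 1 := le_max_left _ _
          _ = Real.exp (Real.log (max (absv i t) 1)) := (Real.exp_log hpos).symm
          _ ≤ Real.exp Cb := Real.exp_le_exp.mpr (le_trans hsingle hweil)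
    -- the local statement
    have hS1 : ∀ i : ι, ∃ R' : ℝ, 1 ≤ R' ∧
        ∀ n : ℕ, absv i (ψK.coeff n) * R'^n ≤ R' := by
      intro i
      have hinj : Function.Injective (emb i) := (emb i).injective
      have hdeg2 : 2 ≤ (φ.map (emb i)).natDegree := by
        rw [natDegree_map_eq_of_injective hinj, hdeg]; exact hd
      have horbL : ∀ γ : K, hhat (some γ) = 0 →
          ∃ M : ℝ, ∀ n : ℕ, vC i ((fun t => (φ.map (emb i)).eval t)^[n] (emb i γ)) ≤ M := by
        intro γ hγ
        obtain ⟨M, hM⟩ := horbK γ hγ i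
        refine ⟨M, fun n => ?_⟩
        have hitmap : (fun t => (φ.map (emb i)).eval t)^[n] (emb i γ)
            = emb i ((fun t => φ.eval t)^[n] γ) := by
          induction n with
          | zero => rfl
          | succ j ih =>
              rw [Function.iterate_succ_apply', ih, Function.iterate_succ_apply']
              rw [eval_map, eval₂_at_apply]
        rw [hitmap, hext]
        exact hM n
      obtain ⟨ρ, hρ0, hβα, hinv⟩ := local_disk (hnaC i) hdeg2 (hb i)
        (horbL α hα0) (horbL β hβ0)
      set A0 := emb i a with hA0d
      have hA00 : A0 ≠ 0 := by
        intro h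
        exact ha (hinj (by rw [map_zero]; exact h))
      have hA0sub : A0 = emb i β - emb i α := by rw [hA0d, had, map_sub]
      have hwA : vC i A0 ≤ vC i ρ := by rw [hA0sub]; exact hβα
      have hwApos : 0 < vC i A0 := (vC i).pos hA00
      have hρ'0 : ρ * A0⁻¹ ≠ 0 := mul_ne_zero hρ0 (inv_ne_zero hA00)
      have hR'val : vC i (ρ * A0⁻¹) = vC i ρ * (vC i A0)⁻¹ := by
        rw [map_mul, map_inv₀]
      have hR'1 : 1 ≤ vC i (ρ * A0⁻¹) := by
        rw [hR'val, ← div_eq_mul_inv]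
        exact (one_le_div hwApos).mpr hwA
      -- the conjugated polynomial maps the disk of radius R' into itself
      have hψKv_eval : ∀ u : Cv i, (ψK.map (emb i)).eval u
          = A0⁻¹ * ((φ.map (emb i)).eval (A0 * u + emb i α) - emb i α) := by
        intro u
        rw [hψKd, psi_map]
        simp [eval_comp]
        rfl
      have hmap' : ∀ u : Cv i, vC i u ≤ vC i (ρ * A0⁻¹) →
          vC i ((ψK.map (emb i)).eval u) ≤ vC i (ρ * A0⁻¹) := by
        intro u hu
        rw [hψKv_eval]
        have h1 : vC i ((A0 * u + emb i α) - emb i α) ≤ vC i ρ := by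
          have e : (A0 * u + emb i α) - emb i α = A0 * u := by ring
          rw [e, map_mul]
          calc vC i A0 * vC i u ≤ vC i A0 * (vC i ρ * (vC i A0)⁻¹) := by
                refine mul_le_mul_of_nonneg_left ?_ ((vC i).nonneg A0)
                rw [← hR'val]; exact hu
            _ = vC i ρ := by field_simp
        have h2 := hinv (A0 * u + emb i α) h1
        rw [map_mul, map_inv₀, hR'val]
        calc (vC i A0)⁻¹ * vC i ((φ.map (emb i)).eval (A0 * u + emb i α) - emb i α)
            ≤ (vC i A0)⁻¹ * vC i ρ :=
              mul_le_mul_of_nonneg_left h2 (inv_nonneg.mpr ((vC i).nonneg A0))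
          _ = vC i ρ * (vC i A0)⁻¹ := mul_comm _ _
      have h1card : ∀ k : ℕ, (k : Cv i) ≠ 0 → vC i (k : Cv i) = 1 := by
        intro k hk
        have hkK : (k : K) ≠ 0 := by
          intro h
          apply hk
          rw [← map_natCast (emb i) k, h, map_zero]
        rw [← map_natCast (emb i) k, hext]
        have halgk : IsAlgebraic F ((k : K)) := by
          rw [← map_natCast (algebraMap F K) k]
          exact isAlgebraic_algebraMap _
        exact (hconst _ hkK).mpr halgk i
      refine ⟨vC i (ρ * A0⁻¹), hR'1, fun n => ?_⟩
      have hcb := coeff_bound_of_maps_disk (hnaC i) h1card hρ'0 hmap' n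
      rw [coeff_map, hext] at hcb
      exact hcb
    -- the top coefficient has absolute value one everywhere
    have htopne : ψK.coeff d ≠ 0 := by
      rw [hψKd, ← hdeg, psi_coeff_top φ ha α (by omega)]
      exact mul_ne_zero (inv_ne_zero ha)
        (mul_ne_zero (leadingCoeff_ne_zero.mpr hφ0) (pow_ne_zero _ ha))
    have hle1top : ∀ i, absv i (ψK.coeff d) ≤ 1 := by
      intro i
      obtain ⟨R', hR'1, hbd⟩ := hS1 i
      have h := hbd d
      by_contra hgt
      push_neg at hgt
      have hR'pos : 0 < R' := lt_of_lt_of_le one_pos hR'1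
      have hRd : R' ≤ R'^d := by
        calc R' = R'^1 := (pow_one R').symm
          _ ≤ R'^d := pow_le_pow_right₀ hR'1 (by omega)
      have : R'^d < absv i (ψK.coeff d) * R'^d :=
        (lt_mul_iff_one_lt_left (pow_pos hR'pos d)).mpr hgt
      linarith
    have htopeq : ∀ i, absv i (ψK.coeff d) = 1 :=
      abs_rigid absv hfin hprod htopne hle1top
    have hall : ∀ n : ℕ, ∀ i, absv i (ψK.coeff n) ≤ 1 := by
      intro n i
      obtain ⟨R', hR'1, hbd⟩ := hS1 i
      have hReq : R' = 1 := by
        refine le_antisymm ?_ hR'1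
        have h := hbd d
        rw [htopeq i, one_mul] at h
        by_contra hgt
        push_neg at hgt
        have : R' < R'^d := by
          calc R' = R'^1 := (pow_one R').symm
            _ < R'^d := pow_lt_pow_right₀ hgt (by omega)
        linarith
      have h := hbd n
      rw [hReq, one_pow, mul_one] at h
      exact h
    intro n
    by_cases h0 : ψK.coeff n = 0
    · rw [hψKd] at h0
      rw [h0]
      exact isAlgebraic_zero
    · have := abs_rigid absv hfin hprod h0 (hall n)
      exact (hconst _ h0).mp this
end

section
/- Let C_v be a complete and algebraically closed field with a nontrivial non-archimedean absolute value |·|_v, and let φ ∈ C_v[z] be a polynomial of degree d ≥ 2 with leading coefficient a_d ∈ C_v^×. Set ρ_v = |a_d|_v^{-1/(d-1)}. Then there is a unique smallest disk U_0 ⊆ C_v containing the filled Julia set 𝔎_{φ,v} (that is, U_0 is a disk containing 𝔎_{φ,v} which is contained in every disk containing 𝔎_{φ,v}), and moreover U_0 is a closed disk of some radius r_v with r_v ≥ ρ_v. -/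
open Polynomial

/-- `U` is a closed disk (of positive radius): `U = {x : |x - a| ≤ r}`. -/
def IsClosedDisk {Cv : Type*} [Field Cv] (v : AbsoluteValue Cv ℝ) (U : Set Cv) : Prop :=
  ∃ (a : Cv) (r : ℝ), 0 < r ∧ U = {x : Cv | v (x - a) ≤ r}

/-- `U` is an open disk (of positive radius): `U = {x : |x - a| < r}`. -/
def IsOpenDisk {Cv : Type*} [Field Cv] (v : AbsoluteValue Cv ℝ) (U : Set Cv) : Prop :=
  ∃ (a : Cv) (r : ℝ), 0 < r ∧ U = {x : Cv | v (x - a) < r}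

/-- `U` is a disk: an open or a closed disk. -/
def IsDisk {Cv : Type*} [Field Cv] (v : AbsoluteValue Cv ℝ) (U : Set Cv) : Prop :=
  IsOpenDisk v U ∨ IsClosedDisk v U

/-- The filled Julia set of a polynomial `φ ∈ C_v[z]`: the set of points with
bounded forward orbit. -/
def filledJulia {Cv : Type*} [Field Cv] (v : AbsoluteValue Cv ℝ) (φ : Polynomial Cv) :
    Set Cv :=
  {x : Cv | ∃ B : ℝ, ∀ n : ℕ, v ((fun y => φ.eval y)^[n] x) ≤ B}


/-!
Let `x₀` be a fixed point of `φ`, `a` its leading coefficient, and `ρ = |a|^{-1/(d-1)}`, so that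
`|a| ρ^{d-1} = 1`. Factoring `φ(z) - x₀ = a ∏ (z - θ)`, every `y` farther from `x₀` than all the
roots `θ` satisfies `|φ(y) - x₀| = |a| |y - x₀|^{d-1} · |y - x₀|` by the ultrametric inequality.
Hence a point at distance `t > max(ρ, max_θ |θ - x₀|)` escapes geometrically, while a point at
distance exactly `ρ > max_θ |θ - x₀|` stays on that sphere forever. The roots `θ` lie in the
filled Julia set, so its points are at distance at most `r = max(ρ, max_θ |θ - x₀|)` from `x₀`
and some point (a root, or a point of the invariant sphere) realizes `r`. In an ultrametric
field a disk containing two points at distance `r` contains the closed disk of radius `r` around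
either, so `D̄(x₀, r)` is the smallest disk containing the filled Julia set.
-/

open Polynomial

section Ultrametric

variable {K : Type*} [Field K] {v : AbsoluteValue K ℝ}

theorem abv_sub_le_max_of_abv_sub_le (hna : IsNonarchimedean v) {x y z : K} (b : K)
    (hy : v (y - x) ≤ v (z - x)) : v (y - b) ≤ max (v (z - b)) (v (x - b)) := by
  have hz : v (z - x) ≤ max (v (z - b)) (v (x - b)) := by
    simpa [v.map_sub b x] using hna (z - b) (b - x)
  calc v (y - b) = v ((y - x) + (x - b)) := by rw [sub_add_sub_cancel]
    _ ≤ max (v (y - x)) (v (x - b)) := hna _ _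
    _ ≤ max (v (z - b)) (v (x - b)) := max_le (hy.trans hz) (le_max_right _ _)

theorem IsDisk.closedBall_subset (hna : IsNonarchimedean v) {W : Set K} (hW : IsDisk v W)
    {x z : K} (hx : x ∈ W) (hz : z ∈ W) : {y | v (y - x) ≤ v (z - x)} ⊆ W := by
  intro y hy
  rcases hW with ⟨b, r, -, rfl⟩ | ⟨b, r, -, rfl⟩
  exacts [(abv_sub_le_max_of_abv_sub_le hna b hy).trans_lt (max_lt hz hx),
    (abv_sub_le_max_of_abv_sub_le hna b hy).trans (max_le hz hx)]

def IsSmallestDiskContaining (v : AbsoluteValue K ℝ) (S U : Set K) : Prop :=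
  IsDisk v U ∧ S ⊆ U ∧ ∀ W : Set K, IsDisk v W → S ⊆ W → U ⊆ W

theorem IsSmallestDiskContaining.unique {S U U' : Set K} (hU : IsSmallestDiskContaining v S U)
    (hU' : IsSmallestDiskContaining v S U') : U' = U :=
  (hU'.2.2 U hU.1 hU.2.1).antisymm (hU.2.2 U' hU'.1 hU'.2.1)

theorem isSmallestDiskContaining_closedBall (hna : IsNonarchimedean v) {S : Set K} {x z : K}
    (hx : x ∈ S) (hz : z ∈ S) (hxz : 0 < v (z - x)) (hS : ∀ y ∈ S, v (y - x) ≤ v (z - x)) :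
    IsSmallestDiskContaining v S {y | v (y - x) ≤ v (z - x)} :=
  ⟨Or.inr ⟨x, _, hxz, rfl⟩, hS, fun _ hW hSW => hW.closedBall_subset hna (hSW hx) (hSW hz)⟩

end Ultrametric

theorem Polynomial.Splits.abv_eval_eq_of_forall_roots_lt {K : Type*} [Field K]
    {v : AbsoluteValue K ℝ} (hna : IsNonarchimedean v) {P : K[X]} (hP : P.Splits) {c y : K}
    (hroots : ∀ u ∈ P.roots, v (u - c) < v (y - c)) :
    v (P.eval y) = v P.leadingCoeff * v (y - c) ^ P.natDegree := by
  have hfactor : ∀ u ∈ P.roots, v (y - u) = v (y - c) := fun u hu => by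
    rw [← sub_add_sub_cancel y c u]
    exact hna.add_eq_left_of_lt (by rw [v.map_sub]; exact hroots u hu)
  rw [hP.eval_eq_prod_roots, map_mul, map_multiset_prod, Multiset.map_map, Function.comp_def,
    Multiset.map_congr rfl hfactor, Multiset.map_const', Multiset.prod_replicate,
    hP.natDegree_eq_card_roots]

section FilledJulia

variable {K : Type*} [Field K] {v : AbsoluteValue K ℝ} {φ : K[X]}

theorem mem_filledJulia_iff_exists_abv_iterate_sub_le (x₀ : K) {x : K} :
    x ∈ filledJulia v φ ↔ ∃ B : ℝ, ∀ n, v ((fun y => φ.eval y)^[n] x - x₀) ≤ B := by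
  constructor
  · rintro ⟨B, hB⟩
    refine ⟨B + v x₀, fun n => ?_⟩
    have := v.sub_le ((fun y => φ.eval y)^[n] x) 0 x₀
    simp only [sub_zero, zero_sub, v.map_neg] at this
    linarith [hB n]
  · rintro ⟨B, hB⟩
    refine ⟨B + v x₀, fun n => ?_⟩
    have := v.sub_le ((fun y => φ.eval y)^[n] x) x₀ 0
    simp only [sub_zero] at this
    linarith [hB n]

theorem mem_filledJulia_of_eval_eq_fixedPoint {x₀ θ : K} (hx₀ : φ.eval x₀ = x₀)
    (hθ : φ.eval θ = x₀) : θ ∈ filledJulia v φ := by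
  refine ⟨max (v θ) (v x₀), fun n => ?_⟩
  cases n with
  | zero => exact le_max_left _ _
  | succ n =>
    rw [Function.iterate_succ_apply, hθ, Function.iterate_fixed hx₀]
    exact le_max_right _ _

end FilledJulia

theorem rpow_neg_one_div_eq_of_mul_pow_eq_one {A ρ : ℝ} {k : ℕ} (hA : 0 ≤ A) (hρ : 0 ≤ ρ)
    (hk : k ≠ 0) (h : A * ρ ^ k = 1) : A ^ (-(1 / (k : ℝ))) = ρ := by
  rw [Real.rpow_neg hA, ← Real.inv_rpow hA, ← eq_inv_of_mul_eq_one_right h, one_div,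
    Real.pow_rpow_inv_natCast hρ hk]

theorem Polynomial.exists_eval_eq_self {K : Type*} [Field K] [IsAlgClosed K] {φ : K[X]}
    (hφ : 2 ≤ φ.natDegree) : ∃ x, φ.eval x = x := by
  have hdeg : (φ - X).natDegree = φ.natDegree :=
    natDegree_sub_eq_left_of_natDegree_lt (by rw [natDegree_X]; omega)
  obtain ⟨x, hx⟩ := IsAlgClosed.exists_root (φ - X)
    (natDegree_pos_iff_degree_pos.mp (by omega)).ne'
  exact ⟨x, by simpa [sub_eq_zero] using hx⟩

section FixedPoint

variable {K : Type*} [Field K] [IsAlgClosed K] {v : AbsoluteValue K ℝ}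
  (hna : IsNonarchimedean v) {φ : K[X]}
include hna

theorem abv_eval_sub_eq_of_forall_roots_lt (hφ : 0 < φ.natDegree) {x₀ y : K}
    (hroots : ∀ u ∈ (φ - C x₀).roots, v (u - x₀) < v (y - x₀)) :
    v (φ.eval y - x₀) = v φ.leadingCoeff * v (y - x₀) ^ (φ.natDegree - 1) * v (y - x₀) := by
  have hlc : (φ - C x₀).leadingCoeff = φ.leadingCoeff :=
    leadingCoeff_sub_of_degree_lt (degree_C_le.trans_lt (natDegree_pos_iff_degree_pos.mp hφ))
  have h := (IsAlgClosed.splits (φ - C x₀)).abv_eval_eq_of_forall_roots_lt hna hroots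
  rw [eval_sub, eval_C, hlc, natDegree_sub_C] at h
  rw [h, mul_assoc, ← pow_succ, Nat.sub_add_cancel hφ]

theorem not_mem_filledJulia_of_forall_roots_lt (hφ : 0 < φ.natDegree) {x₀ x : K}
    (hroots : ∀ u ∈ (φ - C x₀).roots, v (u - x₀) < v (x - x₀))
    (hgrowth : 1 < v φ.leadingCoeff * v (x - x₀) ^ (φ.natDegree - 1)) :
    x ∉ filledJulia v φ := by
  set t := v (x - x₀)
  set κ := v φ.leadingCoeff * t ^ (φ.natDegree - 1)
  have hstep : ∀ y, t ≤ v (y - x₀) → κ * v (y - x₀) ≤ v (φ.eval y - x₀) := fun y hy => by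
    rw [abv_eval_sub_eq_of_forall_roots_lt hna hφ fun u hu => (hroots u hu).trans_le hy]
    gcongr
    dsimp only [κ]
    gcongr
  have hgrow : ∀ n, t * κ ^ n ≤ v ((fun y => φ.eval y)^[n] x - x₀) := by
    intro n
    induction n with
    | zero => simp [t]
    | succ n ih =>
      rw [Function.iterate_succ_apply']
      calc t * κ ^ (n + 1) = κ * (t * κ ^ n) := by ring
        _ ≤ κ * v ((fun y => φ.eval y)^[n] x - x₀) := by gcongr
        _ ≤ _ := hstep _ ((le_mul_of_one_le_right (v.nonneg _) (one_le_pow₀ hgrowth.le)).trans ih)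
  obtain ⟨u, hu⟩ := Multiset.exists_mem_of_ne_zero
    ((IsAlgClosed.splits (φ - C x₀)).roots_ne_zero (by rw [natDegree_sub_C]; omega))
  have ht : 0 < t := (v.nonneg _).trans_lt (hroots u hu)
  intro hx
  obtain ⟨B, hB⟩ := (mem_filledJulia_iff_exists_abv_iterate_sub_le x₀).mp hx
  obtain ⟨n, hn⟩ := pow_unbounded_of_one_lt (B / t) hgrowth
  rw [div_lt_iff₀ ht] at hn
  linarith [hgrow n, hB n]

theorem mem_filledJulia_of_forall_roots_lt (hφ : 0 < φ.natDegree) {x₀ z : K}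
    (hroots : ∀ u ∈ (φ - C x₀).roots, v (u - x₀) < v (z - x₀))
    (hunit : v φ.leadingCoeff * v (z - x₀) ^ (φ.natDegree - 1) = 1) :
    z ∈ filledJulia v φ := by
  have hsphere : ∀ n, v ((fun y => φ.eval y)^[n] z - x₀) = v (z - x₀) := by
    intro n
    induction n with
    | zero => rfl
    | succ n ih =>
      rw [Function.iterate_succ_apply',
        abv_eval_sub_eq_of_forall_roots_lt hna hφ (ih ▸ hroots), ih, hunit, one_mul]
  exact (mem_filledJulia_iff_exists_abv_iterate_sub_le x₀).mpr ⟨_, fun n => (hsphere n).le⟩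

theorem abv_sub_le_max_of_mem_filledJulia (hφ : 2 ≤ φ.natDegree) {x₀ : K} {m ρ : ℝ}
    (hroots : ∀ u ∈ (φ - C x₀).roots, v (u - x₀) ≤ m) (hρ : 0 ≤ ρ)
    (hunit : v φ.leadingCoeff * ρ ^ (φ.natDegree - 1) = 1) {x : K}
    (hx : x ∈ filledJulia v φ) : v (x - x₀) ≤ max m ρ := by
  by_contra! hfar
  have hA : 0 < v φ.leadingCoeff := (v.nonneg _).lt_of_ne (by rintro h; simp [← h] at hunit)
  refine not_mem_filledJulia_of_forall_roots_lt hna (by omega)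
    (fun u hu => (hroots u hu).trans_lt ((le_max_left _ _).trans_lt hfar)) ?_ hx
  rw [← hunit]
  gcongr
  · omega
  · exact (le_max_right _ _).trans_lt hfar

theorem exists_fixedPoint_farthest_mem_filledJulia (hφ : 2 ≤ φ.natDegree) :
    ∃ x₀ z : K, x₀ ∈ filledJulia v φ ∧ z ∈ filledJulia v φ ∧
      (∀ x ∈ filledJulia v φ, v (x - x₀) ≤ v (z - x₀)) ∧
      v φ.leadingCoeff ^ (-(1 / ((φ.natDegree : ℝ) - 1))) ≤ v (z - x₀) := by
  obtain ⟨x₀, hx₀⟩ := exists_eval_eq_self hφ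
  have hroots_mem : ∀ θ ∈ (φ - C x₀).roots, θ ∈ filledJulia v φ := fun θ hθ =>
    mem_filledJulia_of_eval_eq_fixedPoint hx₀ (by simpa [sub_eq_zero] using (mem_roots'.mp hθ).2)
  obtain ⟨u, hu, hu_max⟩ := Multiset.exists_max_image (fun u => v (u - x₀))
    ((IsAlgClosed.splits (φ - C x₀)).roots_ne_zero (by rw [natDegree_sub_C]; omega))
  obtain ⟨c, hc⟩ := IsAlgClosed.exists_pow_nat_eq φ.leadingCoeff⁻¹ (by omega : 0 < φ.natDegree - 1)
  have hunit : v φ.leadingCoeff * v c ^ (φ.natDegree - 1) = 1 := by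
    rw [← map_pow, ← map_mul, hc, mul_inv_cancel₀ (leadingCoeff_ne_zero.mpr
      (ne_zero_of_natDegree_gt hφ)), map_one]
  have hρ : v φ.leadingCoeff ^ (-(1 / ((φ.natDegree : ℝ) - 1))) = v c := by
    rw [← Nat.cast_pred (by omega)]
    exact rpow_neg_one_div_eq_of_mul_pow_eq_one (v.nonneg _) (v.nonneg _) (by omega) hunit
  have hK : ∀ x ∈ filledJulia v φ, v (x - x₀) ≤ max (v (u - x₀)) (v c) := fun x hx =>
    abv_sub_le_max_of_mem_filledJulia hna hφ hu_max (v.nonneg c) hunit hx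
  have hx₀K := mem_filledJulia_of_eval_eq_fixedPoint (v := v) hx₀ hx₀
  rw [hρ]
  rcases le_or_gt (v c) (v (u - x₀)) with hcu | hcu
  · exact ⟨x₀, u, hx₀K, hroots_mem u hu, fun x hx => (hK x hx).trans_eq (max_eq_left hcu), hcu⟩
  · -- all roots are nearer than `ρ = |c|`, so `x₀ + c` lies on an invariant sphere
    have hz : v (x₀ + c - x₀) = v c := by rw [add_sub_cancel_left]
    refine ⟨x₀, x₀ + c, hx₀K, ?_, fun x hx => hz ▸ (hK x hx).trans_eq (max_eq_right hcu.le),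
      hz.ge⟩
    exact mem_filledJulia_of_forall_roots_lt hna (by omega)
      (fun θ hθ => hz ▸ (hu_max θ hθ).trans_lt hcu) (hz ▸ hunit)

end FixedPoint

theorem exists_unique_smallest_disk_containing_filledJulia_general
    {Cv : Type*} [Field Cv] [IsAlgClosed Cv]
    (v : AbsoluteValue Cv ℝ)
    (hna : IsNonarchimedean v)
    (φ : Polynomial Cv) (d : ℕ) (hdeg : φ.natDegree = d) (hd : 2 ≤ d) :
    ∃ U₀ : Set Cv,
      -- `U₀` is a smallest disk containing the filled Julia set
      (IsDisk v U₀ ∧ filledJulia v φ ⊆ U₀ ∧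
        ∀ W : Set Cv, IsDisk v W → filledJulia v φ ⊆ W → U₀ ⊆ W) ∧
      -- and it is the unique such disk
      (∀ U' : Set Cv, (IsDisk v U' ∧ filledJulia v φ ⊆ U' ∧
        ∀ W : Set Cv, IsDisk v W → filledJulia v φ ⊆ W → U' ⊆ W) → U' = U₀) ∧
      -- moreover `U₀` is a closed disk of some radius `r ≥ ρ_v = |a_d|^{-1/(d-1)}`
      (∃ (a : Cv) (r : ℝ), (v φ.leadingCoeff) ^ (-(1 / ((d : ℝ) - 1))) ≤ r ∧
        U₀ = {x : Cv | v (x - a) ≤ r}) := by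
  subst hdeg
  obtain ⟨x₀, z, hx₀, hz, hfar, hρ⟩ := exists_fixedPoint_farthest_mem_filledJulia hna hd
  have hρ_pos : 0 < v φ.leadingCoeff ^ (-(1 / ((φ.natDegree : ℝ) - 1))) :=
    Real.rpow_pos_of_pos (v.pos (leadingCoeff_ne_zero.mpr (ne_zero_of_natDegree_gt hd))) _
  have hU₀ := isSmallestDiskContaining_closedBall hna hx₀ hz (hρ_pos.trans_le hρ) hfar
  exact ⟨_, hU₀, fun U' hU' => hU₀.unique hU', x₀, _, hρ, rfl⟩

/-- Lemma 2.5a,b: Let `C_v` be a complete, algebraically closed field with a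
nontrivial non-archimedean absolute value, and `φ ∈ C_v[z]` a polynomial of degree `d ≥ 2`
with leading coefficient `a_d ≠ 0`; set `ρ_v = |a_d|^{-1/(d-1)}`.  Then there is a unique
smallest disk `U₀` containing the filled Julia set `𝔎_{φ,v}`, and `U₀` is a closed disk of
some radius `r_v ≥ ρ_v`. -/
theorem exists_unique_smallest_disk_containing_filledJulia
    {Cv : Type*} [Field Cv] [IsAlgClosed Cv]
    (v : AbsoluteValue Cv ℝ)
    (hna : IsNonarchimedean v)
    (hnt : ∃ x : Cv, x ≠ 0 ∧ v x ≠ 1)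
    (hcomp : SeqComplete v)
    (φ : Polynomial Cv) (d : ℕ) (hdeg : φ.natDegree = d) (hd : 2 ≤ d) :
    ∃ U₀ : Set Cv,
      -- `U₀` is a smallest disk containing the filled Julia set
      (IsDisk v U₀ ∧ filledJulia v φ ⊆ U₀ ∧
        ∀ W : Set Cv, IsDisk v W → filledJulia v φ ⊆ W → U₀ ⊆ W) ∧
      -- and it is the unique such disk
      (∀ U' : Set Cv, (IsDisk v U' ∧ filledJulia v φ ⊆ U' ∧
        ∀ W : Set Cv, IsDisk v W → filledJulia v φ ⊆ W → U' ⊆ W) → U' = U₀) ∧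
      -- moreover `U₀` is a closed disk of some radius `r ≥ ρ_v = |a_d|^{-1/(d-1)}`
      (∃ (a : Cv) (r : ℝ), (v φ.leadingCoeff) ^ (-(1 / ((d : ℝ) - 1))) ≤ r ∧
        U₀ = {x : Cv | v (x - a) ≤ r}) :=
  exists_unique_smallest_disk_containing_filledJulia_general v hna φ d hdeg hd
end

section
/- Let C_v be a complete and algebraically closed field with a nontrivial non-archimedean absolute value |·|_v, and let φ ∈ C_v[z] be a polynomial of degree d ≥ 2 with leading coefficient a_d ∈ C_v^×. Set ρ_v = |a_d|_v^{-1/(d-1)}, and let U_0 be the unique smallest disk containing the filled Julia set 𝔎_{φ,v}, a closed disk of radius r_v ≥ ρ_v. Then φ has potentially good reduction at v if and only if r_v = ρ_v; and in that case, 𝔎_{φ,v} = U_0. -/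
open Polynomial

section Aux
variable {Cv : Type*} [Field Cv] (v : AbsoluteValue Cv ℝ)

theorem na_sum (hna : IsNonarchimedean v) {ι : Type*} (s : Finset ι) (f : ι → Cv) {B : ℝ}
    (hB : 0 ≤ B) (h : ∀ i ∈ s, v (f i) ≤ B) : v (∑ i ∈ s, f i) ≤ B := by
  classical
  induction s using Finset.induction with
  | empty => simpa using hB
  | insert _ _ hx ih =>
    rename_i a s
    rw [Finset.sum_insert hx]
    refine le_trans (hna _ _) (max_le (h a (by simp)) (ih fun i hi => h i (by simp [hi])))

theorem na_add_eq (hna : IsNonarchimedean v) {x y : Cv} (h : v y < v x) : v (x + y) = v x := by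
  refine le_antisymm (le_trans (hna x y) (by rw [max_eq_left h.le])) ?_
  have hx : x = (x + y) + (-y) := by ring
  have h2 : v x ≤ max (v (x + y)) (v y) := by
    calc v x = v ((x + y) + (-y)) := by rw [← hx]
      _ ≤ max (v (x + y)) (v (-y)) := hna _ _
      _ = max (v (x + y)) (v y) := by rw [v.map_neg]
  rcases max_cases (v (x + y)) (v y) with ⟨he, _⟩ | ⟨he, _⟩
  · rwa [he] at h2
  · rw [he] at h2; exact absurd (lt_of_le_of_lt h2 h) (lt_irrefl _)

theorem eval_le_one (hna : IsNonarchimedean v) {p : Polynomial Cv}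
    (hp : ∀ m, v (p.coeff m) ≤ 1) {x : Cv} (hx : v x ≤ 1) : v (p.eval x) ≤ 1 := by
  rw [eval_eq_sum_range]
  refine na_sum v hna _ _ zero_le_one fun i _ => ?_
  rw [v.map_mul, v.map_pow]
  calc v (p.coeff i) * v x ^ i ≤ 1 * 1 ^ i :=
        mul_le_mul (hp i) (pow_le_pow_left₀ (v.nonneg x) hx i) (by positivity) zero_le_one
    _ = 1 := by simp

theorem coeff_mul_le_one (hna : IsNonarchimedean v) {p q : Polynomial Cv}
    (hp : ∀ m, v (p.coeff m) ≤ 1) (hq : ∀ m, v (q.coeff m) ≤ 1) :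
    ∀ m, v ((p * q).coeff m) ≤ 1 := by
  intro m
  rw [coeff_mul]
  refine na_sum v hna _ _ zero_le_one fun i _ => ?_
  rw [v.map_mul]
  exact mul_le_one₀ (hp _) (v.nonneg _) (hq _)

theorem coeff_prod_le_one (hna : IsNonarchimedean v) (s : Multiset Cv)
    (hs : ∀ x ∈ s, v x ≤ 1) : ∀ m, v ((s.map fun x => X - C x).prod.coeff m) ≤ 1 := by
  induction s using Multiset.induction with
  | empty =>
    intro m
    simp only [Multiset.map_zero, Multiset.prod_zero]
    rcases eq_or_ne m 0 with rfl | hm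
    · simp
    · simp [coeff_one, hm]
  | cons a s ih =>
    intro m
    rw [Multiset.map_cons, Multiset.prod_cons]
    refine coeff_mul_le_one v hna (fun k => ?_) (ih fun x hx => hs x (by simp [hx])) m
    rcases k with - | k
    · simpa using hs a (by simp)
    · rcases k with - | k
      · simp
      · simp [coeff_X, coeff_C]

theorem prod_le_pow {s : Multiset ℝ} {r : ℝ} (hr : 0 ≤ r) (h0 : ∀ x ∈ s, 0 ≤ x)
    (h1 : ∀ x ∈ s, x ≤ r) : s.prod ≤ r ^ Multiset.card s := by
  induction s using Multiset.induction with
  | empty => simp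
  | cons a s ih =>
    rw [Multiset.prod_cons, Multiset.card_cons, pow_succ, mul_comm (r ^ _) r]
    have := ih (fun x hx => h0 x (by simp [hx])) (fun x hx => h1 x (by simp [hx]))
    refine mul_le_mul (h1 a (by simp)) this (Multiset.prod_nonneg fun x hx => h0 x (by simp [hx])) hr


theorem prod_eq_one_of_le {s : Multiset ℝ} (h0 : ∀ x ∈ s, 0 ≤ x) (h1 : ∀ x ∈ s, x ≤ 1)
    (hp : s.prod = 1) : ∀ x ∈ s, x = 1 := by
  induction s using Multiset.induction with
  | empty => simp
  | cons a s ih =>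
    rw [Multiset.prod_cons] at hp
    have hsp : s.prod ≤ 1 := by
      have := prod_le_pow (s := s) (r := 1) zero_le_one (fun x hx => h0 x (by simp [hx]))
        (fun x hx => h1 x (by simp [hx]))
      simpa using this
    have hsp0 : 0 ≤ s.prod := Multiset.prod_nonneg fun x hx => h0 x (by simp [hx])
    have ha1 : a ≤ 1 := h1 a (by simp)
    have ha0 : 0 ≤ a := h0 a (by simp)
    have ha : a = 1 := by nlinarith
    subst ha
    rw [one_mul] at hp
    intro x hx
    rcases Multiset.mem_cons.mp hx with rfl | hx
    · rfl
    · exact ih (fun y hy => h0 y (by simp [hy])) (fun y hy => h1 y (by simp [hy])) hp x hx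

theorem prod_eq_pow_of_eq {s : Multiset ℝ} {r : ℝ} (h : ∀ x ∈ s, x = r) :
    s.prod = r ^ Multiset.card s := by
  induction s using Multiset.induction with
  | empty => simp
  | cons a s ih =>
    rw [Multiset.prod_cons, Multiset.card_cons, h a (by simp), pow_succ,
      ih (fun x hx => h x (by simp [hx])), mul_comm]

end Aux
section Aux2
variable {Cv : Type*} [Field Cv] [IsAlgClosed Cv] (v : AbsoluteValue Cv ℝ)

/-- `k` integral elements at pairwise unit distance. -/
theorem separated_units (hna : IsNonarchimedean v) (k : ℕ) :
    ∃ u : ℕ → Cv, (∀ i, v (u i) ≤ 1) ∧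
      (∀ i < k, ∀ j < k, i ≠ j → v (u i - u j) = 1) := by
  induction k with
  | zero => exact ⟨fun _ => 0, fun i => by simp, fun i hi => by omega⟩
  | succ k ih =>
    obtain ⟨u, hu1, hu2⟩ := ih
    rcases Nat.eq_zero_or_pos k with rfl | hk
    · exact ⟨fun _ => 0, fun i => by simp, fun i hi j hj hij => by omega⟩
    set P : Polynomial Cv := ∏ i ∈ Finset.range k, (X - C (u i)) with hP
    have h1 : P.Monic := monic_prod_of_monic _ _ fun i _ => monic_X_sub_C (u i)
    have hdeg : P.degree = (k : ℕ) := by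
      rw [hP, degree_prod]
      simp [degree_X_sub_C]
    set g : Polynomial Cv := P + 1 with hg
    have hgm : g.Monic := h1.add_of_left (by rw [hdeg, degree_one]; exact_mod_cast hk)
    have hgd : g.degree ≠ 0 := by
      have : g.degree = P.degree :=
        degree_add_eq_left_of_degree_lt (by rw [hdeg, degree_one]; exact_mod_cast hk)
      rw [this, hdeg]
      exact_mod_cast (by omega : k ≠ 0)
    obtain ⟨z, hz⟩ := IsAlgClosed.exists_root g hgd
    have hzP : ∏ i ∈ Finset.range k, (z - u i) = -1 := by
      have : P.eval z + 1 = 0 := by simpa [hg] using hz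
      have h2 : P.eval z = -1 := eq_neg_of_add_eq_zero_left this
      rw [hP] at h2
      simpa [eval_prod] using h2
    have hprod : ∏ i ∈ Finset.range k, v (z - u i) = 1 := by
      have := congrArg v hzP
      rwa [map_prod, v.map_neg, v.map_one] at this
    have hzle : v z ≤ 1 := by
      by_contra hc
      push_neg at hc
      have heach : ∀ i ∈ Finset.range k, v (z - u i) = v z := by
        intro i _
        have : v (-(u i)) < v z := by rw [v.map_neg]; exact lt_of_le_of_lt (hu1 i) hc
        simpa [sub_eq_add_neg] using na_add_eq v hna this
      rw [Finset.prod_congr rfl heach, Finset.prod_const, Finset.card_range] at hprod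
      have : (1:ℝ) < v z ^ k := one_lt_pow₀ hc (by omega)
      rw [hprod] at this
      exact lt_irrefl _ this
    have hle : ∀ i ∈ Finset.range k, v (z - u i) ≤ 1 := by
      intro i _
      have := hna z (-(u i))
      rw [v.map_neg, ← sub_eq_add_neg] at this
      exact le_trans this (max_le hzle (hu1 i))
    have heq1 : ∀ i ∈ Finset.range k, v (z - u i) = 1 := by
      have key := prod_eq_one_of_le (s := (Finset.range k).val.map fun i => v (z - u i))
        (by intro x hx; obtain ⟨i, _, rfl⟩ := Multiset.mem_map.mp hx; exact v.nonneg _)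
        (by intro x hx; obtain ⟨i, hi, rfl⟩ := Multiset.mem_map.mp hx; exact hle i hi)
        (by rw [← Finset.prod_eq_multiset_prod] at *; exact hprod)
      intro i hi
      exact key _ (Multiset.mem_map.mpr ⟨i, hi, rfl⟩)
    refine ⟨fun i => if i = k then z else u i, fun i => ?_, fun i hi j hj hij => ?_⟩
    · by_cases h : i = k <;> simp [h, hzle, hu1 i]
    · by_cases hik : i = k
      · have hjk : j ≠ k := by omega
        simp only [if_pos hik, if_neg hjk]
        first
        | exact heq1 j (Finset.mem_range.mpr (by omega))
        | · rw [v.map_sub]; exact heq1 j (Finset.mem_range.mpr (by omega))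
      · by_cases hjk : j = k
        · simp only [if_neg hik, if_pos hjk]
          first
          | exact heq1 i (Finset.mem_range.mpr (by omega))
          | · rw [v.map_sub]; exact heq1 i (Finset.mem_range.mpr (by omega))
        · simp only [if_neg hik, if_neg hjk]
          exact hu2 i (by omega) j (by omega) hij

end Aux2
section Aux3
variable {Cv : Type*} [Field Cv] [IsAlgClosed Cv] (v : AbsoluteValue Cv ℝ)

theorem mem_filledJulia_of_image {φ : Polynomial Cv} {x : Cv}
    (h : φ.eval x ∈ filledJulia v φ) : x ∈ filledJulia v φ := by
  obtain ⟨B, hB⟩ := h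
  refine ⟨max B (v x), fun n => ?_⟩
  cases n with
  | zero => simp
  | succ n =>
    rw [Function.iterate_succ_apply]
    exact le_trans (hB n) (le_max_left _ _)

theorem image_mem_filledJulia {φ : Polynomial Cv} {x : Cv}
    (h : x ∈ filledJulia v φ) : φ.eval x ∈ filledJulia v φ := by
  obtain ⟨B, hB⟩ := h
  refine ⟨B, fun n => ?_⟩
  have := hB (n + 1)
  rwa [Function.iterate_succ_apply] at this

theorem exists_fixedPoint {φ : Polynomial Cv} {d : ℕ} (hdeg : φ.natDegree = d)
    (hd : 2 ≤ d) : ∃ z : Cv, φ.eval z = z := by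
  have hdx : (X : Polynomial Cv).natDegree < φ.natDegree := by
    rw [natDegree_X, hdeg]; omega
  have h1 : (φ - X).natDegree = d := by rw [natDegree_sub_eq_left_of_natDegree_lt hdx, hdeg]
  have h2 : (φ - X).degree ≠ 0 := by
    rw [degree_eq_natDegree (fun h0 => by simp [h0] at h1; omega), h1]
    exact_mod_cast (by omega : d ≠ 0)
  obtain ⟨z, hz⟩ := IsAlgClosed.exists_root _ h2
  refine ⟨z, ?_⟩
  have h3 : φ.eval z - z = 0 := by simpa using hz
  exact sub_eq_zero.mp h3

theorem fixedPoint_mem_filledJulia {φ : Polynomial Cv} {z : Cv} (h : φ.eval z = z) :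
    z ∈ filledJulia v φ := by
  refine ⟨v z, fun n => ?_⟩
  have : (fun y => φ.eval y)^[n] z = z := by
    induction n with
    | zero => rfl
    | succ n ih => rw [Function.iterate_succ_apply', ih]; exact h
  simp [this]

/-- Factorization of `φ - z` into linear factors with preimage roots. -/
theorem preimage_factorization {φ : Polynomial Cv} {d : ℕ} (hdeg : φ.natDegree = d)
    (hd : 2 ≤ d) (z : Cv) :
    ∃ s : Multiset Cv, Multiset.card s = d ∧ (∀ γ ∈ s, φ.eval γ = z) ∧
      ∀ x : Cv, φ.eval x - z = φ.leadingCoeff * ((s.map fun γ => x - γ)).prod := by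
  set p : Polynomial Cv := φ - C z with hp
  have hpd : p.natDegree = d := by rw [hp, natDegree_sub_C, hdeg]
  have hpne : p ≠ 0 := fun h0 => by simp [h0] at hpd; omega
  have hlc : p.leadingCoeff = φ.leadingCoeff := by
    rw [leadingCoeff, leadingCoeff, hpd, hdeg, hp, coeff_sub, coeff_C, if_neg (by omega : d ≠ 0)]
    ring
  have hsplit : Splits p := IsAlgClosed.splits p
  have hcard : Multiset.card p.roots = d := by rw [← hpd]; exact (splits_iff_card_roots).mp hsplit
  have hfac := hsplit.eq_prod_roots
  refine ⟨p.roots, hcard, fun γ hγ => ?_, fun x => ?_⟩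
  · have := isRoot_of_mem_roots hγ
    have h2 : φ.eval γ - z = 0 := by simpa [hp] using this
    exact sub_eq_zero.mp h2
  · have := congrArg (eval x) hfac
    rw [eval_mul, eval_C, eval_multiset_prod, hlc] at this
    have h2 : p.eval x = φ.eval x - z := by simp [hp]
    rw [h2] at this
    rw [this, Multiset.map_map]
    congr 1
    refine congrArg Multiset.prod (Multiset.map_congr rfl fun γ _ => ?_)
    simp

end Aux3
section Aux4
variable {Cv : Type*} [Field Cv] [IsAlgClosed Cv] (v : AbsoluteValue Cv ℝ)

theorem dist_le_of_mem_disk (hna : IsNonarchimedean v) {x γ a : Cv} {r : ℝ}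
    (hx : v (x - a) ≤ r) (hγ : v (γ - a) ≤ r) : v (x - γ) ≤ r := by
  have h1 : x - γ = (x - a) + (a - γ) := by ring
  rw [h1]
  refine le_trans (hna _ _) (max_le hx ?_)
  rw [v.map_sub]; exact hγ

theorem leadingCoeff_pos {φ : Polynomial Cv} {d : ℕ} (hdeg : φ.natDegree = d) (hd : 2 ≤ d) :
    0 < v φ.leadingCoeff := by
  refine v.pos ?_
  intro h0
  rw [leadingCoeff_eq_zero] at h0
  rw [h0] at hdeg
  simp at hdeg; omega

/-- Any point of the filled Julia set is `φ(x)` for some `x` in the filled Julia set,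
and the distance to a fixed point is controlled. -/
theorem diam_bound (hna : IsNonarchimedean v) {φ : Polynomial Cv} {d : ℕ}
    (hdeg : φ.natDegree = d) (hd : 2 ≤ d) {a : Cv} {r : ℝ} (hr : 0 < r)
    (hsub : filledJulia v φ ⊆ {x : Cv | v (x - a) ≤ r}) {z₀ : Cv} (hz₀ : z₀ ∈ filledJulia v φ)
    {z : Cv} (hz : z ∈ filledJulia v φ) : v (z - z₀) ≤ v φ.leadingCoeff * r ^ d := by
  -- find a preimage x of z in the filled Julia set
  obtain ⟨s, hcard, hev, -⟩ := preimage_factorization hdeg hd z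
  have hsne : s ≠ 0 := by
    intro h0; rw [h0] at hcard; simp at hcard; omega
  obtain ⟨x, hxs⟩ := Multiset.exists_mem_of_ne_zero hsne
  have hx : x ∈ filledJulia v φ := mem_filledJulia_of_image v (by rw [hev x hxs]; exact hz)
  -- factor φ - z₀
  obtain ⟨t, hcard', hev', hfac'⟩ := preimage_factorization hdeg hd z₀
  have hzx : z - z₀ = φ.eval x - z₀ := by rw [hev x hxs]
  rw [hzx, hfac' x, v.map_mul]
  have hprod : v ((t.map fun γ => x - γ).prod) ≤ r ^ d := by
    rw [map_multiset_prod, Multiset.map_map]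
    have := prod_le_pow (s := t.map fun γ => v (x - γ)) (r := r) hr.le
      (by intro y hy; obtain ⟨γ, hγ, rfl⟩ := Multiset.mem_map.mp hy; exact v.nonneg _)
      (by intro y hy; obtain ⟨γ, hγ, rfl⟩ := Multiset.mem_map.mp hy
          have hγJ : γ ∈ filledJulia v φ :=
            mem_filledJulia_of_image v (by rw [hev' γ hγ]; exact hz₀)
          exact dist_le_of_mem_disk v hna (hsub hx) (hsub hγJ))
    rw [Multiset.card_map, hcard'] at this
    simpa [Multiset.map_map] using this
  calc v φ.leadingCoeff * v ((t.map fun γ => x - γ).prod)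
      ≤ v φ.leadingCoeff * r ^ d := by
        exact mul_le_mul_of_nonneg_left hprod (v.nonneg _)

theorem stepA (hna : IsNonarchimedean v) {φ : Polynomial Cv} {d : ℕ}
    (hdeg : φ.natDegree = d) (hd : 2 ≤ d) {a : Cv} {r : ℝ} (hr : 0 < r)
    (hsub : filledJulia v φ ⊆ {x : Cv | v (x - a) ≤ r})
    (hmin : ∀ (b : Cv) (r' : ℝ), 0 < r' →
      filledJulia v φ ⊆ {x : Cv | v (x - b) ≤ r'} → r ≤ r') :
    1 ≤ v φ.leadingCoeff * r ^ (d - 1) := by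
  obtain ⟨z₀, hfix⟩ := exists_fixedPoint hdeg hd
  have hz₀ : z₀ ∈ filledJulia v φ := fixedPoint_mem_filledJulia v hfix
  have hK : 0 < v φ.leadingCoeff := leadingCoeff_pos v hdeg hd
  have hpos : 0 < v φ.leadingCoeff * r ^ d := by positivity
  have hsub2 : filledJulia v φ ⊆ {x : Cv | v (x - z₀) ≤ v φ.leadingCoeff * r ^ d} :=
    fun z hz => diam_bound v hna hdeg hd hr hsub hz₀ hz
  have hle := hmin z₀ _ hpos hsub2
  have hsplit : v φ.leadingCoeff * r ^ d = (v φ.leadingCoeff * r ^ (d - 1)) * r := by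
    rw [mul_assoc, ← pow_succ]
    congr 2
    omega
  rw [hsplit] at hle
  exact (le_mul_iff_one_le_left hr).mp hle

end Aux4
section Aux5
variable {Cv : Type*} [Field Cv] [IsAlgClosed Cv] (v : AbsoluteValue Cv ℝ)

theorem pow_eq_pow_inj {r₁ r₂ : ℝ} (h1 : 0 ≤ r₁) (h2 : 0 ≤ r₂) {n : ℕ} (hn : n ≠ 0)
    (h : r₁ ^ n = r₂ ^ n) : r₁ = r₂ := (pow_left_inj₀ h1 h2 hn).mp h

theorem radius_eq_iff {K r : ℝ} (hK : 0 < K) (hr : 0 < r) {d : ℕ} (hd : 2 ≤ d) :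
    K * r ^ (d - 1) = 1 ↔ r = K ^ (-(1 / ((d : ℝ) - 1))) := by
  set x : ℝ := -(1 / ((d : ℝ) - 1)) with hx
  have hdr : ((d : ℝ) - 1) = ((d - 1 : ℕ) : ℝ) := by
    have : (1:ℕ) ≤ d := by omega
    push_cast [Nat.cast_sub this]
    ring
  have hdne : ((d : ℝ) - 1) ≠ 0 := by
    have : (2:ℝ) ≤ (d:ℝ) := by exact_mod_cast hd
    linarith
  have key : K * (K ^ x) ^ (d - 1) = 1 := by
    have h2 : x * ((d - 1 : ℕ) : ℝ) = -1 := by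
      rw [← hdr, hx]
      field_simp
    have h3 : (K ^ x) ^ (d - 1 : ℕ) = K ^ (-1 : ℝ) := by
      rw [← Real.rpow_natCast (K ^ x) (d - 1), ← Real.rpow_mul hK.le, h2]
    rw [h3, Real.rpow_neg_one]
    exact mul_inv_cancel₀ hK.ne'
  constructor
  · intro h
    have hpow : r ^ (d - 1) = (K ^ x) ^ (d - 1) := by
      have hKx : K ^ x ≠ 0 := (Real.rpow_pos_of_pos hK x).ne'
      exact mul_left_cancel₀ hK.ne' (h.trans key.symm)
    exact pow_eq_pow_inj hr.le (Real.rpow_pos_of_pos hK x).le (by omega) hpow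
  · intro h
    rw [h]
    exact key

end Aux5
section Aux6
variable {Cv : Type*} [Field Cv] [IsAlgClosed Cv] (v : AbsoluteValue Cv ℝ)

/-- The affine conjugate `ψ(z) = c⁻¹ (φ(cz + a) - a)`. -/
noncomputable def affConj (φ : Polynomial Cv) (c a : Cv) : Polynomial Cv :=
  C c⁻¹ * (φ.comp (C c * X + C a) - C a)

theorem affConj_eval (φ : Polynomial Cv) {c : Cv} (a : Cv) (hc : c ≠ 0) (y : Cv) :
    φ.eval (c * y + a) = c * (affConj φ c a).eval y + a := by
  simp only [affConj, eval_mul, eval_sub, eval_comp, eval_add, eval_C, eval_X]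
  field_simp
  ring

theorem affConj_natDegree (φ : Polynomial Cv) {c : Cv} (a : Cv) (hc : c ≠ 0) {d : ℕ}
    (hdeg : φ.natDegree = d) (hd : 2 ≤ d) : (affConj φ c a).natDegree = d := by
  have hg : (C c * X + C a).natDegree = 1 := natDegree_linear hc
  have h1 : (φ.comp (C c * X + C a)).natDegree = d := by
    rw [natDegree_comp, hg, hdeg, mul_one]
  have h2 : (φ.comp (C c * X + C a) - C a).natDegree = d := by rw [natDegree_sub_C, h1]
  rw [affConj, natDegree_C_mul (inv_ne_zero hc), h2]

theorem affConj_coeff_d (φ : Polynomial Cv) {c : Cv} (a : Cv) (hc : c ≠ 0) {d : ℕ}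
    (hdeg : φ.natDegree = d) (hd : 2 ≤ d) :
    (affConj φ c a).coeff d = c⁻¹ * (φ.leadingCoeff * c ^ d) := by
  have hg : (C c * X + C a).natDegree = 1 := natDegree_linear hc
  have h1 : (φ.comp (C c * X + C a)).natDegree = d := by
    rw [natDegree_comp, hg, hdeg, mul_one]
  have hlc : (φ.comp (C c * X + C a)).coeff d = φ.leadingCoeff * c ^ d := by
    have := leadingCoeff_comp (p := φ) (q := C c * X + C a) (by rw [hg]; omega)
    rw [leadingCoeff, h1] at this
    rw [this, leadingCoeff_linear hc, hdeg]
  rw [affConj, coeff_C_mul, coeff_sub, coeff_C, if_neg (by omega : d ≠ 0), sub_zero, hlc]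

theorem affConj_monic_part (φ : Polynomial Cv) {c : Cv} (a : Cv) (hc : c ≠ 0) {d : ℕ}
    (hdeg : φ.natDegree = d) (hd : 2 ≤ d) (hcpow : c ^ (d - 1) = φ.leadingCoeff⁻¹) :
    (affConj φ c a).coeff d = 1 := by
  have hlc : φ.leadingCoeff ≠ 0 := by
    intro h0
    rw [leadingCoeff_eq_zero] at h0
    rw [h0] at hdeg; simp at hdeg; omega
  rw [affConj_coeff_d φ a hc hdeg hd]
  have hcd : c ^ d = c ^ (d - 1) * c := by
    rw [← pow_succ]
    congr 1
    omega
  rw [hcd, hcpow]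
  field_simp

/-- All coefficients of the conjugate are integral, assuming the filled Julia set is
contained in the disk of radius `r = v c` around `a`. -/
theorem affConj_coeff_le_one (hna : IsNonarchimedean v) (φ : Polynomial Cv) {c a : Cv}
    (hc : c ≠ 0) {d : ℕ} (hdeg : φ.natDegree = d) (hd : 2 ≤ d)
    (hcpow : c ^ (d - 1) = φ.leadingCoeff⁻¹) {r : ℝ} (hvc : v c = r)
    (hsub : filledJulia v φ ⊆ {x : Cv | v (x - a) ≤ r}) :
    ∀ m, v ((affConj φ c a).coeff m) ≤ 1 := by
  obtain ⟨z₀, hfix⟩ := exists_fixedPoint hdeg hd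
  have hz₀ : z₀ ∈ filledJulia v φ := fixedPoint_mem_filledJulia v hfix
  set ψ := affConj φ c a with hψ
  set w : Cv := (z₀ - a) * c⁻¹ with hw
  have hrpos : 0 < r := by rw [← hvc]; exact v.pos hc
  have hvw : v w ≤ 1 := by
    rw [hw, v.map_mul, map_inv₀, hvc]
    have h1 : v (z₀ - a) ≤ r := hsub hz₀
    rw [inv_eq_one_div]
    calc v (z₀ - a) * (1 / r) ≤ r * (1 / r) := by
          apply mul_le_mul_of_nonneg_right h1
          positivity
      _ = 1 := by field_simp
  set χ := ψ - C w with hχ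
  have hχd : χ.natDegree = d := by rw [hχ, natDegree_sub_C, affConj_natDegree φ a hc hdeg hd]
  have hχm : χ.Monic := by
    unfold Polynomial.Monic
    rw [leadingCoeff, hχd, hχ, coeff_sub, coeff_C, if_neg (by omega : d ≠ 0), sub_zero]
    exact affConj_monic_part φ a hc hdeg hd hcpow
  have hsplits : Splits χ := IsAlgClosed.splits χ
  have hfac := hsplits.eq_prod_roots_of_monic hχm
  have hroots : ∀ x ∈ χ.roots, v x ≤ 1 := by
    intro x hx
    have hax := isRoot_of_mem_roots hx
    have hψx : ψ.eval x = w := by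
      have : ψ.eval x - w = 0 := by simpa [hχ] using hax
      exact sub_eq_zero.mp this
    have hcw : c * w + a = z₀ := by rw [hw]; field_simp; ring
    have hβ : φ.eval (c * x + a) = z₀ := by
      rw [affConj_eval φ a hc x, ← hψ, hψx, hcw]
    have hβJ : c * x + a ∈ filledJulia v φ :=
      mem_filledJulia_of_image v (by rw [hβ]; exact hz₀)
    have h1 : v (c * x + a - a) ≤ r := hsub hβJ
    rw [add_sub_cancel_right, v.map_mul, hvc] at h1
    nlinarith [v.nonneg x, hrpos]
  have hχc : ∀ m, v (χ.coeff m) ≤ 1 := by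
    intro m
    rw [hfac]
    exact coeff_prod_le_one v hna χ.roots hroots m
  intro m
  have : ψ.coeff m = χ.coeff m + (C w).coeff m := by rw [hχ]; simp
  rw [this]
  refine le_trans (hna _ _) (max_le (hχc m) ?_)
  rw [coeff_C]
  split
  · exact hvw
  · simp

end Aux6
section Aux7
variable {Cv : Type*} [Field Cv] [IsAlgClosed Cv] (v : AbsoluteValue Cv ℝ)

theorem conjNum_affine_s4 (φ : Polynomial Cv) (c a : Cv) :
    conjNum φ c a 0 1 = φ.comp (C c * X + C a) - C a := by
  unfold conjNum
  have hsum : ∀ i ∈ Finset.range (φ.natDegree + 1),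
      C (φ.coeff i) * (C c * X + C a) ^ i * (C (0:Cv) * X + C 1) ^ (φ.natDegree - i)
        = C (φ.coeff i) * (C c * X + C a) ^ i := by
    intro i _
    simp
  rw [Finset.sum_congr rfl hsum]
  have hcomp : φ.comp (C c * X + C a) =
      ∑ i ∈ Finset.range (φ.natDegree + 1), C (φ.coeff i) * (C c * X + C a) ^ i := by
    rw [Polynomial.comp, Polynomial.eval₂_eq_sum_range]
  rw [hcomp]
  simp

theorem conjDen_affine_s4 (φ : Polynomial Cv) (c a : Cv) :
    conjDen φ c a 0 1 = C c := by
  unfold conjDen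
  simp

theorem hasPGR_of_affConj (hna : IsNonarchimedean v) (φ : Polynomial Cv) {c a : Cv}
    (hc : c ≠ 0) {d : ℕ} (hdeg : φ.natDegree = d) (hd : 2 ≤ d)
    (hcoeff : ∀ m, v ((affConj φ c a).coeff m) ≤ 1)
    (hcd : (affConj φ c a).coeff d = 1) :
    HasPotentiallyGoodReduction v φ := by
  refine ⟨c, a, 0, 1, by simpa using hc, c⁻¹, inv_ne_zero hc, ?_⟩
  have h1 : C c⁻¹ * conjNum φ c a 0 1 = affConj φ c a := by
    rw [conjNum_affine_s4, affConj]
  have h2 : C c⁻¹ * conjDen φ c a 0 1 = 1 := by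
    rw [conjDen_affine_s4, ← C_mul, inv_mul_cancel₀ hc, C_1]
  rw [h1, h2, hdeg]
  refine ⟨le_of_eq (affConj_natDegree φ a hc hdeg hd), by simp, hcoeff, ?_, ?_, ?_, ?_⟩
  · intro m
    rcases eq_or_ne m 0 with rfl | hm
    · simp
    · simp [coeff_one, hm]
  · right
    exact ⟨0, by simp⟩
  · intro x hx
    rintro ⟨-, habs⟩
    simp at habs
  · rintro ⟨habs, -⟩
    rw [hcd] at habs
    simp at habs

theorem julia_eq_disk_of_affConj (hna : IsNonarchimedean v) (φ : Polynomial Cv) {c a : Cv}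
    (hc : c ≠ 0) {d : ℕ} (hdeg : φ.natDegree = d) (hd : 2 ≤ d) {r : ℝ} (hvc : v c = r)
    (hsub : filledJulia v φ ⊆ {x : Cv | v (x - a) ≤ r})
    (hcoeff : ∀ m, v ((affConj φ c a).coeff m) ≤ 1) :
    filledJulia v φ = {x : Cv | v (x - a) ≤ r} := by
  refine Set.Subset.antisymm hsub fun x hx => ?_
  set ψ := affConj φ c a with hψ
  set y₀ : Cv := (x - a) * c⁻¹ with hy₀
  have hrpos : 0 < r := by rw [← hvc]; exact v.pos hc
  have hvy₀ : v y₀ ≤ 1 := by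
    rw [hy₀, v.map_mul, map_inv₀, hvc]
    have h1 : v (x - a) ≤ r := hx
    rw [inv_eq_one_div]
    calc v (x - a) * (1 / r) ≤ r * (1 / r) := by
          apply mul_le_mul_of_nonneg_right h1; positivity
      _ = 1 := by field_simp
  have hiter : ∀ n : ℕ, (fun y => φ.eval y)^[n] x
      = c * ((fun y => ψ.eval y)^[n] y₀) + a := by
    intro n
    induction n with
    | zero =>
      simp only [Function.iterate_zero, id_eq, hy₀]
      field_simp
      ring
    | succ n ih =>
      rw [Function.iterate_succ_apply', Function.iterate_succ_apply', ih,
        affConj_eval φ a hc]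
  have hbnd : ∀ n : ℕ, v ((fun y => ψ.eval y)^[n] y₀) ≤ 1 := by
    intro n
    induction n with
    | zero => simpa using hvy₀
    | succ n ih =>
      rw [Function.iterate_succ_apply']
      exact eval_le_one v hna hcoeff ih
  refine ⟨max r (v a) + v a, fun n => ?_⟩
  rw [hiter n]
  refine le_trans (hna _ _) ?_
  have h1 : v (c * ((fun y => ψ.eval y)^[n] y₀)) ≤ r := by
    rw [v.map_mul, hvc]
    nlinarith [hbnd n, hrpos, v.nonneg ((fun y => ψ.eval y)^[n] y₀)]
  have h2 : v a ≤ max r (v a) := le_max_right _ _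
  have h3 : r ≤ max r (v a) := le_max_left _ _
  refine le_trans (max_le (le_trans h1 h3) h2) ?_
  nlinarith [v.nonneg a]

end Aux7
section Aux8
variable {Cv : Type*} [Field Cv] [IsAlgClosed Cv] (v : AbsoluteValue Cv ℝ)

theorem easy_side (hna : IsNonarchimedean v) {φ : Polynomial Cv} {d : ℕ}
    (hdeg : φ.natDegree = d) (hd : 2 ≤ d) {a : Cv} {r : ℝ} (hr : 0 < r)
    (hsub : filledJulia v φ ⊆ {x : Cv | v (x - a) ≤ r})
    (hrad : v φ.leadingCoeff * r ^ (d - 1) = 1) :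
    HasPotentiallyGoodReduction v φ ∧ filledJulia v φ = {x : Cv | v (x - a) ≤ r} := by
  have hlc : φ.leadingCoeff ≠ 0 := by
    intro h0
    rw [leadingCoeff_eq_zero] at h0
    rw [h0] at hdeg; simp at hdeg; omega
  obtain ⟨c, hcpow⟩ := IsAlgClosed.exists_pow_nat_eq (φ.leadingCoeff⁻¹) (n := d - 1)
    (by omega)
  have hc : c ≠ 0 := by
    intro h0
    rw [h0, zero_pow (by omega : d - 1 ≠ 0)] at hcpow
    exact hlc (by simpa using hcpow.symm)
  have hvc : v c = r := by
    refine pow_eq_pow_inj (v.nonneg c) hr.le (by omega : d - 1 ≠ 0) ?_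
    have h1 : v c ^ (d - 1) = (v φ.leadingCoeff)⁻¹ := by
      rw [← v.map_pow, hcpow, map_inv₀]
    have h2 : r ^ (d - 1) = (v φ.leadingCoeff)⁻¹ := by
      have hK : 0 < v φ.leadingCoeff := v.pos hlc
      field_simp at hrad ⊢
      linarith [hrad]
    rw [h1, h2]
  have hcoeff := affConj_coeff_le_one v hna φ hc hdeg hd hcpow hvc hsub
  have hcd := affConj_monic_part φ a hc hdeg hd hcpow
  exact ⟨hasPGR_of_affConj v hna φ hc hdeg hd hcoeff hcd,
    julia_eq_disk_of_affConj v hna φ hc hdeg hd hvc hsub hcoeff⟩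

end Aux8
section Aux9
variable {Cv : Type*} [Field Cv] [IsAlgClosed Cv] (v : AbsoluteValue Cv ℝ)

/-- Degree-`d` homogenization of `p`, evaluated at `(x, y)`. -/
noncomputable def hstar (p : Polynomial Cv) (d : ℕ) (x y : Cv) : Cv :=
  ∑ i ∈ Finset.range (d + 1), p.coeff i * x ^ i * y ^ (d - i)

theorem hstar_smul (p : Polynomial Cv) (d : ℕ) (t x y : Cv) :
    hstar p d (t * x) (t * y) = t ^ d * hstar p d x y := by
  unfold hstar
  rw [Finset.mul_sum]
  refine Finset.sum_congr rfl fun i hi => ?_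
  have hid : i + (d - i) = d := by
    have := Finset.mem_range.mp hi; omega
  rw [mul_pow, mul_pow]
  have h3 : t ^ i * t ^ (d - i) = t ^ d := by rw [← pow_add, hid]
  rw [← h3]
  ring

theorem hstar_eval (p : Polynomial Cv) {d : ℕ} (hp : p.natDegree ≤ d) (x : Cv) :
    hstar p d x 1 = p.eval x := by
  unfold hstar
  rw [eval_eq_sum_range' (by omega : p.natDegree < d + 1)]
  refine Finset.sum_congr rfl fun i hi => by simp

theorem hstar_tail (hna : IsNonarchimedean v) {p : Polynomial Cv}
    (hp : ∀ m, v (p.coeff m) ≤ 1) (d : ℕ) {b : Cv} (hb : v b ≤ 1) :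
    v (hstar p d 1 b - p.coeff d) ≤ v b := by
  unfold hstar
  rw [Finset.sum_range_succ]
  simp only [one_pow, mul_one, Nat.sub_self, pow_zero]
  rw [add_sub_cancel_right]
  refine na_sum v hna _ _ (v.nonneg b) fun i hi => ?_
  have hin : i < d := Finset.mem_range.mp hi
  simp only [one_pow, mul_one, v.map_mul, v.map_pow]
  have h1 : v b ^ (d - i) ≤ v b :=
    pow_le_of_le_one (v.nonneg b) hb (by omega)
  nlinarith [hp i, v.nonneg (p.coeff i), v.nonneg b, pow_nonneg (v.nonneg b) (d - i)]

theorem hstar_le_one (hna : IsNonarchimedean v) {p : Polynomial Cv}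
    (hp : ∀ m, v (p.coeff m) ≤ 1) (d : ℕ) {x y : Cv} (hx : v x ≤ 1) (hy : v y ≤ 1) :
    v (hstar p d x y) ≤ 1 := by
  unfold hstar
  refine na_sum v hna _ _ zero_le_one fun i hi => ?_
  rw [v.map_mul, v.map_mul, v.map_pow, v.map_pow]
  have h1 : v x ^ i ≤ 1 := pow_le_one₀ (v.nonneg x) hx
  have h2 : v y ^ (d - i) ≤ 1 := pow_le_one₀ (v.nonneg y) hy
  exact mul_le_one₀ (mul_le_one₀ (hp i) (pow_nonneg (v.nonneg x) i) h1)
    (pow_nonneg (v.nonneg y) (d - i)) h2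

theorem hstar_scale (p : Polynomial Cv) {d : ℕ} (hp : p.natDegree ≤ d) {y : Cv}
    (hy : y ≠ 0) (x : Cv) : hstar p d x y = y ^ d * p.eval (x / y) := by
  have h := hstar_smul p d y (x / y) 1
  rw [mul_one] at h
  have hx : y * (x / y) = x := by field_simp
  rw [hx] at h
  rw [h, hstar_eval p hp]

theorem hstar_scale' (p : Polynomial Cv) (d : ℕ) {x : Cv} (hx : x ≠ 0) (y : Cv) :
    hstar p d x y = x ^ d * hstar p d 1 (y / x) := by
  have h := hstar_smul p d x 1 (y / x)
  rw [mul_one] at h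
  have hy : x * (y / x) = y := by field_simp
  rw [hy] at h
  exact h

/-- The key unimodular estimate from a good pair. -/
theorem goodPair_max_eq_one (hna : IsNonarchimedean v) {P Q : Polynomial Cv} {d : ℕ}
    (hgp : IsGoodPair v P Q d) {x y : Cv} (hmax : max (v x) (v y) = 1) :
    max (v (hstar P d x y)) (v (hstar Q d x y)) = 1 := by
  obtain ⟨hPd, hQd, hPc, hQc, -, hev, hcd⟩ := hgp
  have hx1 : v x ≤ 1 := by rw [← hmax]; exact le_max_left _ _
  have hy1 : v y ≤ 1 := by rw [← hmax]; exact le_max_right _ _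
  rcases le_or_gt (v x) (v y) with hxy | hyx
  · -- v y = 1
    have hvy : v y = 1 := by rw [max_eq_right hxy] at hmax; exact hmax
    have hyne : y ≠ 0 := fun h0 => by rw [h0] at hvy; simp at hvy
    have hP1 : hstar P d x y = y ^ d * P.eval (x / y) := hstar_scale P hPd hyne x
    have hQ1 : hstar Q d x y = y ^ d * Q.eval (x / y) := hstar_scale Q hQd hyne x
    have hva : v (x / y) ≤ 1 := by
      rw [map_div₀, hvy, div_one]
      exact hx1
    have h2 := hev (x / y) hva
    have hle1 : v (P.eval (x / y)) ≤ 1 := eval_le_one v hna hPc hva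
    have hle2 : v (Q.eval (x / y)) ≤ 1 := eval_le_one v hna hQc hva
    rw [hP1, hQ1, v.map_mul, v.map_mul, v.map_pow, hvy, one_pow, one_mul, one_mul]
    rcases not_and_or.mp h2 with h | h
    · push_neg at h
      exact le_antisymm (max_le hle1 hle2) (le_max_of_le_left h)
    · push_neg at h
      exact le_antisymm (max_le hle1 hle2) (le_max_of_le_right h)
  · -- v x = 1 > v y
    have hvx : v x = 1 := by rw [max_eq_left hyx.le] at hmax; exact hmax
    have hxne : x ≠ 0 := fun h0 => by rw [h0] at hvx; simp at hvx
    have hb : v (y / x) < 1 := by rw [map_div₀, hvx, div_one]; rwa [hvx] at hyx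
    have hb1 : v (y / x) ≤ 1 := hb.le
    have hP1 : hstar P d x y = x ^ d * hstar P d 1 (y / x) := hstar_scale' P d hxne y
    have hQ1 : hstar Q d x y = x ^ d * hstar Q d 1 (y / x) := hstar_scale' Q d hxne y
    have hPle : v (hstar P d 1 (y / x)) ≤ 1 := hstar_le_one v hna hPc d (by simp) hb1
    have hQle : v (hstar Q d 1 (y / x)) ≤ 1 := hstar_le_one v hna hQc d (by simp) hb1
    rw [hP1, hQ1, v.map_mul, v.map_mul, v.map_pow, hvx, one_pow, one_mul, one_mul]
    have key : ∀ p : Polynomial Cv, (∀ m, v (p.coeff m) ≤ 1) → v (p.coeff d) = 1 →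
        v (hstar p d 1 (y / x)) = 1 := by
      intro p hpc hpd
      have htail := hstar_tail v hna hpc d hb1
      have hsp : hstar p d 1 (y / x) = p.coeff d + (hstar p d 1 (y / x) - p.coeff d) := by
        ring
      rw [hsp, na_add_eq v hna (by rw [hpd]; exact lt_of_le_of_lt htail hb), hpd]
    rcases not_and_or.mp hcd with h | h
    · push_neg at h
      have h1 : v (P.coeff d) = 1 := le_antisymm (hPc d) h
      rw [key P hPc h1]
      exact max_eq_left hQle
    · push_neg at h
      have h1 : v (Q.coeff d) = 1 := le_antisymm (hQc d) h
      rw [key Q hQc h1]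
      exact max_eq_right hPle

/-- Scaling version for arbitrary nonzero `(x, y)`. -/
theorem goodPair_max_eq (hna : IsNonarchimedean v) {P Q : Polynomial Cv} {d : ℕ}
    (hgp : IsGoodPair v P Q d) {x y : Cv} (hne : ¬(x = 0 ∧ y = 0)) :
    max (v (hstar P d x y)) (v (hstar Q d x y)) = (max (v x) (v y)) ^ d := by
  rcases le_or_gt (v y) (v x) with hyx | hxy
  · have hxne : x ≠ 0 := by
      intro h0
      refine hne ⟨h0, ?_⟩
      have h2 : v y ≤ 0 := by rw [h0] at hyx; simpa using hyx
      exact v.eq_zero.mp (le_antisymm h2 (v.nonneg y))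
    have h1 : max (v (1:Cv)) (v (y / x)) = 1 := by
      rw [v.map_one]
      refine max_eq_left ?_
      rw [map_div₀]
      exact div_le_one_of_le₀ hyx (v.nonneg x)
    have key := goodPair_max_eq_one v hna hgp h1
    rw [hstar_scale' P d hxne y, hstar_scale' Q d hxne y, v.map_mul, v.map_mul, v.map_pow]
    rw [max_eq_left hyx, ← mul_max_of_nonneg _ _ (pow_nonneg (v.nonneg x) d)] at *
    rw [key, mul_one]
  · have hyne : y ≠ 0 := by
      intro h0
      rw [h0] at hxy
      simp only [map_zero] at hxy
      exact absurd hxy (not_lt.mpr (v.nonneg x))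
    have h1 : max (v (x / y)) (v (1:Cv)) = 1 := by
      rw [v.map_one]
      refine max_eq_right ?_
      rw [map_div₀]
      exact div_le_one_of_le₀ hxy.le (v.nonneg y)
    have key := goodPair_max_eq_one v hna hgp h1
    have hPd := hgp.1
    have hQd := hgp.2.1
    rw [hstar_scale P hPd hyne x, hstar_scale Q hQd hyne x, v.map_mul, v.map_mul, v.map_pow]
    rw [hstar_eval P hPd, hstar_eval Q hQd] at key
    rw [max_eq_right hxy.le, ← mul_max_of_nonneg _ _ (pow_nonneg (v.nonneg y) d), key, mul_one]

end Aux9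
section Aux10
variable {Cv : Type*} [Field Cv] [IsAlgClosed Cv] (v : AbsoluteValue Cv ℝ)

/-- Evaluation of the inner sum of `conjNum`/`conjDen` at `θ = (md w - mb)/s`,
`s = ma - mc w`. -/
theorem S_eval_generic (φ : Polynomial Cv) {d : ℕ} (hdeg : φ.natDegree = d)
    {ma mb mc md w : Cv} (hs0 : ma - mc * w ≠ 0) :
    eval ((md * w - mb) / (ma - mc * w))
      (∑ i ∈ Finset.range (φ.natDegree + 1),
        C (φ.coeff i) * (C ma * X + C mb) ^ i * (C mc * X + C md) ^ (φ.natDegree - i))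
      = ((ma * md - mb * mc) / (ma - mc * w)) ^ d * φ.eval w := by
  set s : Cv := ma - mc * w with hs
  set θ : Cv := (md * w - mb) / s with hθ
  set e : Cv := ma * md - mb * mc with he
  have haθ : ma * θ + mb = e * w / s := by
    rw [hθ, hs, he]
    have hs0' : ma - mc * w ≠ 0 := hs0
    rw [mul_div_assoc', div_add' _ _ _ hs0']
    congr 1
    ring
  have hcθ : mc * θ + md = e / s := by
    rw [hθ, hs, he]
    have hs0' : ma - mc * w ≠ 0 := hs0
    field_simp
    ring
  rw [eval_finset_sum]
  have hterm : ∀ i ∈ Finset.range (φ.natDegree + 1),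
      eval θ (C (φ.coeff i) * (C ma * X + C mb) ^ i * (C mc * X + C md) ^ (φ.natDegree - i))
        = (e / s) ^ d * (φ.coeff i * w ^ i) := by
    intro i hi
    have hid : i + (d - i) = d := by
      have := Finset.mem_range.mp hi
      rw [hdeg] at this
      omega
    simp only [eval_mul, eval_pow, eval_add, eval_C, eval_X, haθ, hcθ, hdeg]
    have h1 : e * w / s = (e / s) * w := by ring
    have h2 : (e / s) ^ i * (e / s) ^ (d - i) = (e / s) ^ d := by rw [← pow_add, hid]
    rw [h1, mul_pow, ← h2]
    ring
  rw [Finset.sum_congr rfl hterm, ← Finset.mul_sum]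
  congr 1
  rw [eval_eq_sum_range' (by omega : φ.natDegree < φ.natDegree + 1)]

theorem conj_identity (φ : Polynomial Cv) {d : ℕ} (hdeg : φ.natDegree = d) (hd : 2 ≤ d)
    {ma mb mc md : Cv} (he : ma * md - mb * mc ≠ 0) (c₀ : Cv)
    {P Q : Polynomial Cv} (hP : P = C c₀ * conjNum φ ma mb mc md)
    (hQ : Q = C c₀ * conjDen φ ma mb mc md)
    (hPd : P.natDegree ≤ d) (hQd : Q.natDegree ≤ d) (w : Cv) :
    hstar P d (md * w - mb) (ma - mc * w)
        = c₀ * (ma * md - mb * mc) ^ d * (md * φ.eval w - mb) ∧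
      hstar Q d (md * w - mb) (ma - mc * w)
        = c₀ * (ma * md - mb * mc) ^ d * (ma - mc * φ.eval w) := by
  set e : Cv := ma * md - mb * mc with he'
  -- the two sides as polynomials in `w`
  set LP : Polynomial Cv := ∑ i ∈ Finset.range (d + 1),
    C (P.coeff i) * (C md * X - C mb) ^ i * (C ma - C mc * X) ^ (d - i) with hLP
  set LQ : Polynomial Cv := ∑ i ∈ Finset.range (d + 1),
    C (Q.coeff i) * (C md * X - C mb) ^ i * (C ma - C mc * X) ^ (d - i) with hLQ
  set RP : Polynomial Cv := C (c₀ * e ^ d) * (C md * φ - C mb) with hRP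
  set RQ : Polynomial Cv := C (c₀ * e ^ d) * (C ma - C mc * φ) with hRQ
  have hevalLP : ∀ z : Cv, LP.eval z = hstar P d (md * z - mb) (ma - mc * z) := by
    intro z
    rw [hLP, eval_finset_sum]
    unfold hstar
    refine Finset.sum_congr rfl fun i hi => by simp
  have hevalLQ : ∀ z : Cv, LQ.eval z = hstar Q d (md * z - mb) (ma - mc * z) := by
    intro z
    rw [hLQ, eval_finset_sum]
    unfold hstar
    refine Finset.sum_congr rfl fun i hi => by simp
  have hevalRP : ∀ z : Cv, RP.eval z = c₀ * e ^ d * (md * φ.eval z - mb) := by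
    intro z; simp [hRP]
  have hevalRQ : ∀ z : Cv, RQ.eval z = c₀ * e ^ d * (ma - mc * φ.eval z) := by
    intro z; simp [hRQ]
  -- generic computation
  have hgen : ∀ z : Cv, ma - mc * z ≠ 0 →
      LP.eval z = RP.eval z ∧ LQ.eval z = RQ.eval z := by
    intro z hsz
    set s : Cv := ma - mc * z with hs
    set θ : Cv := (md * z - mb) / s with hθ
    have hSe' : eval θ (∑ i ∈ Finset.range (φ.natDegree + 1),
        C (φ.coeff i) * (C ma * X + C mb) ^ i * (C mc * X + C md) ^ (φ.natDegree - i))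
        = (e / s) ^ d * φ.eval z := by
      rw [hθ, hs, he']
      exact S_eval_generic φ hdeg (mb := mb) (md := md) hsz
    have hcθ : mc * θ + md = e / s := by
      rw [hθ, hs, he']
      have hsz' : ma - mc * z ≠ 0 := hsz
      field_simp
      ring
    have hT : eval θ ((C mc * X + C md) ^ φ.natDegree) = (e / s) ^ d := by
      rw [eval_pow, eval_add, eval_mul, eval_C, eval_C, eval_X, hcθ, hdeg]
    have hxz : s * θ = md * z - mb := by
      rw [hθ]; field_simp
    have hstarP : hstar P d (md * z - mb) s = s ^ d * P.eval θ := by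
      rw [← hxz] at *
      rw [hstar_scale P hPd hsz]
      congr 1
      rw [mul_comm s θ, mul_div_assoc, div_self hsz, mul_one]
    have hstarQ : hstar Q d (md * z - mb) s = s ^ d * Q.eval θ := by
      rw [← hxz] at *
      rw [hstar_scale Q hQd hsz]
      congr 1
      rw [mul_comm s θ, mul_div_assoc, div_self hsz, mul_one]
    have hNum : P.eval θ = c₀ * ((e / s) ^ d * (md * φ.eval z - mb)) := by
      rw [hP, eval_mul, eval_C]
      congr 1
      unfold conjNum
      rw [eval_sub, eval_mul, eval_mul, eval_C, eval_C, hSe', hT]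
      ring
    have hDen : Q.eval θ = c₀ * ((e / s) ^ d * (ma - mc * φ.eval z)) := by
      rw [hQ, eval_mul, eval_C]
      congr 1
      unfold conjDen
      rw [eval_sub, eval_mul, eval_mul, eval_C, eval_C, hSe', hT]
      ring
    have hpow : s ^ d * (e / s) ^ d = e ^ d := by
      rw [div_pow]
      field_simp
    constructor
    · rw [hevalLP, hevalRP, hstarP, hNum]
      calc s ^ d * (c₀ * ((e / s) ^ d * (md * φ.eval z - mb)))
          = (s ^ d * (e / s) ^ d) * (c₀ * (md * φ.eval z - mb)) := by ring
        _ = c₀ * e ^ d * (md * φ.eval z - mb) := by rw [hpow]; ring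
    · rw [hevalLQ, hevalRQ, hstarQ, hDen]
      calc s ^ d * (c₀ * ((e / s) ^ d * (ma - mc * φ.eval z)))
          = (s ^ d * (e / s) ^ d) * (c₀ * (ma - mc * φ.eval z)) := by ring
        _ = c₀ * e ^ d * (ma - mc * φ.eval z) := by rw [hpow]; ring
  -- the set of good points is infinite
  have hinf : {z : Cv | ma - mc * z ≠ 0}.Infinite := by
    rcases eq_or_ne mc 0 with rfl | hmc
    · have hma : ma ≠ 0 := by
        intro h0
        rw [h0] at he'
        apply he
        rw [he']  -- e = 0 * md - mb * 0
        simp [he']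
      have : {z : Cv | ma - 0 * z ≠ 0} = Set.univ := by
        ext z; simp [hma]
      rw [this]
      exact Set.infinite_univ
    · have hfin : {z : Cv | ma - mc * z ≠ 0}ᶜ.Finite := by
        have hsub : {z : Cv | ma - mc * z ≠ 0}ᶜ ⊆ {ma / mc} := by
          intro z hz
          simp only [Set.mem_compl_iff, Set.mem_setOf_eq, not_not] at hz
          have hz2 : z = ma / mc := by
            field_simp
            linear_combination -hz
          simp [hz2]
        exact Set.Finite.subset (Set.finite_singleton _) hsub
      have h2 := Set.Finite.infinite_compl hfin
      rwa [compl_compl] at h2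
  have heqP : LP = RP :=
    Polynomial.eq_of_infinite_eval_eq LP RP
      (Set.Infinite.mono (fun z hz => (hgen z hz).1) hinf)
  have heqQ : LQ = RQ :=
    Polynomial.eq_of_infinite_eval_eq LQ RQ
      (Set.Infinite.mono (fun z hz => (hgen z hz).2) hinf)
  constructor
  · rw [← hevalLP, heqP, hevalRP]
  · rw [← hevalLQ, heqQ, hevalRQ]

end Aux10
section Aux11
variable {Cv : Type*} [Field Cv] [IsAlgClosed Cv] (v : AbsoluteValue Cv ℝ)

theorem max_mul_left (K x y : ℝ) (hK : 0 ≤ K) : max (K * x) (K * y) = K * max x y := by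
  rw [mul_comm K x, mul_comm K y, mul_comm K (max x y)]
  exact (max_mul_of_nonneg x y hK).symm

set_option maxHeartbeats 2000000 in
theorem hard_side (hna : IsNonarchimedean v) {φ : Polynomial Cv} {d : ℕ}
    (hdeg : φ.natDegree = d) (hd : 2 ≤ d) {a : Cv} {r : ℝ} (hr : 0 < r)
    (hsub : filledJulia v φ ⊆ {x : Cv | v (x - a) ≤ r})
    (hmin : ∀ (b : Cv) (r' : ℝ), 0 < r' →
      filledJulia v φ ⊆ {x : Cv | v (x - b) ≤ r'} → r ≤ r')
    (hpgr : HasPotentiallyGoodReduction v φ) :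
    v φ.leadingCoeff * r ^ (d - 1) = 1 := by
  classical
  obtain ⟨ma, mb, mc, md, hdet, c₀, hc₀, hgp⟩ := hpgr
  rw [hdeg] at hgp
  set e : Cv := ma * md - mb * mc with he'
  set P : Polynomial Cv := C c₀ * conjNum φ ma mb mc md with hP
  set Q : Polynomial Cv := C c₀ * conjDen φ ma mb mc md with hQ
  set n : Cv → ℝ := fun w => max (v (md * w - mb)) (v (ma - mc * w)) with hn
  -- positivity of n
  have hcoordne : ∀ w : Cv, ¬(md * w - mb = 0 ∧ ma - mc * w = 0) := by
    rintro w ⟨h1, h2⟩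
    apply hdet
    have hb : mb = md * w := by linear_combination -h1
    have ha : ma = mc * w := by linear_combination h2
    rw [he', hb, ha]; ring
  have hnpos : ∀ w, 0 < n w := by
    intro w
    rcases not_and_or.mp (hcoordne w) with h | h
    · exact lt_max_of_lt_left (v.pos h)
    · exact lt_max_of_lt_right (v.pos h)
  have hnnonneg : ∀ w, 0 ≤ n w := fun w => (hnpos w).le
  -- the recursion
  set K : ℝ := v c₀ * v e ^ d with hK'
  have hK : 0 < K := mul_pos (v.pos hc₀) (pow_pos (v.pos hdet) d)
  have hKrec : ∀ w, K * n (φ.eval w) = (n w) ^ d := by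
    intro w
    have hid := conj_identity φ hdeg hd hdet c₀ hP hQ hgp.1 hgp.2.1 w
    have hmax := goodPair_max_eq v hna hgp (hcoordne w)
    rw [hid.1, hid.2] at hmax
    simp only [v.map_mul, v.map_pow] at hmax
    rw [max_mul_left _ _ _ (mul_nonneg (v.nonneg c₀) (pow_nonneg (v.nonneg _) d))] at hmax
    simpa only [hn, hK', he'] using hmax
  -- μ and the lower bound
  set μ : ℝ := max (v mc) (v md) with hμ'
  have hμ : 0 < μ := by
    rcases eq_or_ne mc 0 with rfl | h
    · rcases eq_or_ne md 0 with rfl | h2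
      · exfalso; apply hdet; ring
      · exact lt_max_of_lt_right (v.pos h2)
    · exact lt_max_of_lt_left (v.pos h)
  have hlow : ∀ w, v e ≤ μ * n w := by
    intro w
    have hce : e = mc * (md * w - mb) + md * (ma - mc * w) := by rw [he']; ring
    rw [hce]
    refine le_trans (hna _ _) (max_le ?_ ?_)
    · rw [v.map_mul]
      refine mul_le_mul (le_max_left _ _) (le_max_left _ _) (v.nonneg _) hμ.le
    · rw [v.map_mul]
      refine mul_le_mul (le_max_right _ _) (le_max_right _ _) (v.nonneg _) hμ.le
  set a₀ : ℝ := v e / μ with ha₀'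
  have ha₀ : 0 < a₀ := div_pos (v.pos hdet) hμ
  have hlow' : ∀ w, a₀ ≤ n w := by
    intro w
    rw [ha₀', div_le_iff₀ hμ, mul_comm]
    exact hlow w
  -- special point with n w₀ = a₀
  have hw₀ : ∃ w₀, n w₀ = a₀ := by
    rcases le_or_gt (v mc) (v md) with hcm | hcm
    · have hvmd : v md = μ := (max_eq_right hcm).symm
      have hmd : md ≠ 0 := fun h0 => by
        rw [h0] at hvmd; simp at hvmd; exact absurd hvmd.symm hμ.ne'
      refine ⟨mb / md, ?_⟩
      have h1 : md * (mb / md) - mb = 0 := by field_simp; ring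
      have h2 : ma - mc * (mb / md) = e / md := by rw [he']; field_simp
      rw [hn]
      simp only [h1, h2, map_zero, map_div₀]
      rw [hvmd, ha₀']
      exact max_eq_right (by positivity)
    · have hvmc : v mc = μ := (max_eq_left hcm.le).symm
      have hmc : mc ≠ 0 := fun h0 => by
        rw [h0] at hvmc; simp at hvmc; exact absurd hvmc.symm hμ.ne'
      refine ⟨ma / mc, ?_⟩
      have h1 : ma - mc * (ma / mc) = 0 := by field_simp; ring
      have h2 : md * (ma / mc) - mb = e / mc := by rw [he']; field_simp
      rw [hn]
      simp only [h1, h2, map_zero, map_div₀]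
      rw [hvmc, ha₀']
      exact max_eq_left (by positivity)
  -- K ≤ a₀ ^ (d - 1)
  have hpowsplit : a₀ ^ d = a₀ ^ (d - 1) * a₀ := by
    rw [← pow_succ]; congr 1; omega
  have hKle : K ≤ a₀ ^ (d - 1) := by
    obtain ⟨w₀, hww⟩ := hw₀
    have h1 : K * n (φ.eval w₀) = a₀ ^ d := by rw [hKrec w₀, hww]
    have h2 : a₀ ≤ n (φ.eval w₀) := hlow' _
    have h3 : K * a₀ ≤ a₀ ^ d := by
      rw [← h1]
      exact mul_le_mul_of_nonneg_left h2 hK.le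
    rw [hpowsplit] at h3
    exact le_of_mul_le_mul_right h3 ha₀
  -- fixed point pins down K
  obtain ⟨z₀, hfix⟩ := exists_fixedPoint hdeg hd
  have hz₀J : z₀ ∈ filledJulia v φ := fixedPoint_mem_filledJulia v hfix
  have hKz : K = (n z₀) ^ (d - 1) := by
    have h1 : K * n z₀ = (n z₀) ^ d := by rw [← hKrec z₀, hfix]
    have h2 : (n z₀) ^ d = (n z₀) ^ (d - 1) * n z₀ := by
      rw [← pow_succ]; congr 1; omega
    rw [h2] at h1
    exact mul_right_cancel₀ (hnpos z₀).ne' h1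
  have hnz₀ : n z₀ = a₀ := by
    refine le_antisymm ?_ (hlow' z₀)
    by_contra hc
    push_neg at hc
    have h1 : a₀ ^ (d - 1) < (n z₀) ^ (d - 1) :=
      pow_lt_pow_left₀ hc ha₀.le (by omega)
    rw [← hKz] at h1
    exact absurd hKle (not_le.mpr h1)
  have hKeq : K = a₀ ^ (d - 1) := by rw [hKz, hnz₀]
  -- upper bound for n in terms of the point
  set ν : ℝ := max (max (v ma) (v mb)) (max (v mc) (v md)) with hν'
  have hν : 0 < ν := lt_of_lt_of_le hμ (le_max_right _ _)
  have hνa : v ma ≤ ν := le_trans (le_max_left _ _) (le_max_left _ _)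
  have hνb : v mb ≤ ν := le_trans (le_max_right _ _) (le_max_left _ _)
  have hνc : v mc ≤ ν := le_trans (le_max_left _ _) (le_max_right _ _)
  have hνd : v md ≤ ν := le_trans (le_max_right _ _) (le_max_right _ _)
  have hub : ∀ W : Cv, n W ≤ ν * max 1 (v W) := by
    intro W
    have key : ∀ x y : Cv, v x ≤ ν → v y ≤ ν → v (x * W - y) ≤ ν * max 1 (v W) := by
      intro x y hx hy
      have h1 : v (x * W - y) ≤ max (v (x * W)) (v y) := by
        rw [sub_eq_add_neg]
        refine le_trans (hna _ _) ?_
        rw [v.map_neg]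
      refine le_trans h1 (max_le ?_ ?_)
      · rw [v.map_mul]
        exact mul_le_mul hx (le_max_right _ _) (v.nonneg W) (le_trans (v.nonneg x) hx)
      · calc v y ≤ ν * 1 := by rw [mul_one]; exact hy
          _ ≤ ν * max 1 (v W) := mul_le_mul_of_nonneg_left (le_max_left _ _) hν.le
    refine max_le (key md mb hνd hνb) ?_
    have h2 : v (ma - mc * W) = v (mc * W - ma) := v.map_sub _ _
    rw [h2]
    exact key mc ma hνc hνa
  -- escape criterion
  have hesc : ∀ w : Cv, a₀ < n w → w ∉ filledJulia v φ := by
    intro w hgt hmem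
    obtain ⟨B, hB⟩ := hmem
    set q : ℝ := n w / a₀ with hq'
    have hq : 1 < q := by
      rw [hq', lt_div_iff₀ ha₀, one_mul]
      exact hgt
    have hgrow : ∀ k : ℕ, a₀ * q ^ (k + 1) ≤ n ((fun y => φ.eval y)^[k] w) := by
      intro k
      induction k with
      | zero =>
        simp only [Function.iterate_zero, id_eq, pow_one]
        have hqa : a₀ * q = n w := by rw [hq']; field_simp
        rw [zero_add, pow_one, hqa]
      | succ k ih =>
        set W : Cv := (fun y => φ.eval y)^[k] w with hW
        have hstep : K * n (φ.eval W) = (n W) ^ d := hKrec W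
        have h1 : (a₀ * q ^ (k + 1)) ^ d ≤ (n W) ^ d :=
          pow_le_pow_left₀ (by positivity) ih d
        have h2 : K * (a₀ * q ^ (k + 2)) ≤ (n W) ^ d := by
          refine le_trans ?_ h1
          have h3 : (a₀ * q ^ (k + 1)) ^ d = a₀ ^ d * q ^ ((k + 1) * d) := by
            rw [mul_pow, ← pow_mul]
          rw [h3, hpowsplit]
          have h4 : q ^ (k + 2) ≤ q ^ ((k + 1) * d) := by
            refine pow_le_pow_right₀ hq.le ?_
            nlinarith [hd]
          calc K * (a₀ * q ^ (k + 2)) ≤ a₀ ^ (d - 1) * (a₀ * q ^ (k + 2)) := by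
                refine mul_le_mul_of_nonneg_right hKle (by positivity)
            _ ≤ a₀ ^ (d - 1) * (a₀ * q ^ ((k + 1) * d)) := by
                refine mul_le_mul_of_nonneg_left ?_ (by positivity)
                exact mul_le_mul_of_nonneg_left h4 ha₀.le
            _ = a₀ ^ (d - 1) * a₀ * q ^ ((k + 1) * d) := by ring
        rw [Function.iterate_succ_apply', ← hW]
        rw [← hstep] at h2
        exact le_of_mul_le_mul_left h2 hK
    obtain ⟨k, hk⟩ := pow_unbounded_of_one_lt ((ν * max 1 B) / a₀) hq
    have h5 : ν * max 1 B < a₀ * q ^ (k + 1) := by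
      rw [div_lt_iff₀ ha₀] at hk
      have h6 : q ^ k ≤ q ^ (k + 1) := pow_le_pow_right₀ hq.le (by omega)
      nlinarith
    have h7 : n ((fun y => φ.eval y)^[k] w) ≤ ν * max 1 B := by
      refine le_trans (hub _) ?_
      refine mul_le_mul_of_nonneg_left ?_ hν.le
      exact max_le_max le_rfl (hB k)
    linarith [hgrow k]
  -- boundedness criterion
  have hbdd : ∀ w : Cv, n w ≤ a₀ → w ∈ filledJulia v φ := by
    intro w hle
    have hconst : ∀ k : ℕ, n ((fun y => φ.eval y)^[k] w) = a₀ := by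
      intro k
      induction k with
      | zero =>
        simp only [Function.iterate_zero, id_eq]
        exact le_antisymm hle (hlow' w)
      | succ k ih =>
        rw [Function.iterate_succ_apply']
        set W : Cv := (fun y => φ.eval y)^[k] w with hW
        have hstep : K * n (φ.eval W) = (n W) ^ d := hKrec W
        rw [ih] at hstep
        have h2 : (a₀:ℝ) ^ d = K * a₀ := by rw [hKeq, hpowsplit]
        exact mul_left_cancel₀ hK.ne' (by rw [hstep, h2])
    -- uniform bound on the orbit
    have horb : ∀ k : ℕ, v ((fun y => φ.eval y)^[k] w)
        ≤ max (max a₀ (v mb) / v md) (max a₀ (v ma) / v mc) := by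
      intro k
      set W : Cv := (fun y => φ.eval y)^[k] w with hW
      have hnW : n W = a₀ := hconst k
      have h1 : v (md * W - mb) ≤ a₀ := by rw [← hnW]; exact le_max_left _ _
      have h2 : v (ma - mc * W) ≤ a₀ := by rw [← hnW]; exact le_max_right _ _
      rcases eq_or_ne md 0 with hmd | hmd
      · have hmc : mc ≠ 0 := by
          intro h0
          rw [hμ', hmd, h0] at hμ
          simp at hμ
        have h3 : v (mc * W) ≤ max a₀ (v ma) := by
          have h4 : mc * W = ma - (ma - mc * W) := by ring
          rw [h4, sub_eq_add_neg]
          refine le_trans (hna _ _) ?_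
          rw [v.map_neg]
          exact max_le (le_max_right _ _) (le_trans h2 (le_max_left _ _))
        rw [v.map_mul] at h3
        have h5 : v W ≤ max a₀ (v ma) / v mc := by
          rw [le_div_iff₀ (v.pos hmc), mul_comm]
          exact h3
        exact le_trans h5 (le_max_right _ _)
      · have h3 : v (md * W) ≤ max a₀ (v mb) := by
          have h4 : md * W = (md * W - mb) + mb := by ring
          rw [h4]
          refine le_trans (hna _ _) ?_
          exact max_le (le_trans h1 (le_max_left _ _)) (le_max_right _ _)
        rw [v.map_mul] at h3
        have h5 : v W ≤ max a₀ (v mb) / v md := by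
          rw [le_div_iff₀ (v.pos hmd), mul_comm]
          exact h3
        exact le_trans h5 (le_max_left _ _)
    exact ⟨_, horb⟩
  -- the filled Julia set is exactly {w | n w ≤ a₀}
  have hchar : filledJulia v φ = {w : Cv | n w ≤ a₀} := by
    ext w
    constructor
    · intro hw
      by_contra hc
      simp only [Set.mem_setOf_eq, not_le] at hc
      exact hesc w hc hw
    · intro hw
      exact hbdd w hw
  -- the filled Julia set as a disk
  obtain ⟨m, p, hmμ, hmp⟩ : ∃ m p : Cv, v m = μ ∧ ∀ w : Cv, v (m * w - p) ≤ n w := by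
    rcases le_or_gt (v mc) (v md) with hcm | hcm
    · exact ⟨md, mb, (max_eq_right hcm).symm, fun w => le_max_left _ _⟩
    · refine ⟨mc, ma, (max_eq_left hcm.le).symm, fun w => ?_⟩
      rw [v.map_sub]
      exact le_max_right _ _
  have hm0 : m ≠ 0 := fun h0 => by
    rw [h0] at hmμ; simp at hmμ; exact absurd hmμ.symm hμ.ne'
  set b : Cv := p / m with hb'
  set R₀ : ℝ := a₀ / μ with hR₀'
  have hR₀ : 0 < R₀ := div_pos ha₀ hμ
  have hdisk1 : ∀ w ∈ filledJulia v φ, v (w - b) ≤ R₀ := by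
    intro w hw
    rw [hchar] at hw
    have h1 : v (m * w - p) ≤ a₀ := le_trans (hmp w) hw
    have h2 : w - b = (m * w - p) / m := by rw [hb']; field_simp
    rw [h2, map_div₀, hmμ, hR₀']
    gcongr
  have hdisk2 : ∀ x : Cv, v (x - b) ≤ R₀ → n x ≤ a₀ := by
    intro x hx
    have hzb : v (z₀ - b) ≤ R₀ := hdisk1 z₀ hz₀J
    have hxz : v (x - z₀) ≤ R₀ := dist_le_of_mem_disk v hna hx hzb
    have hnz : n z₀ = a₀ := hnz₀
    have hz1 : v (md * z₀ - mb) ≤ a₀ := by rw [← hnz]; exact le_max_left _ _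
    have hz2 : v (ma - mc * z₀) ≤ a₀ := by rw [← hnz]; exact le_max_right _ _
    have hμR : μ * R₀ = a₀ := by
      rw [hR₀']; field_simp
    refine max_le ?_ ?_
    · have h4 : md * x - mb = (md * z₀ - mb) + md * (x - z₀) := by ring
      rw [h4]
      refine le_trans (hna _ _) (max_le hz1 ?_)
      rw [v.map_mul]
      calc v md * v (x - z₀) ≤ μ * R₀ := by
            refine mul_le_mul (le_max_right _ _) hxz (v.nonneg _) hμ.le
        _ = a₀ := hμR
    · have h4 : ma - mc * x = (ma - mc * z₀) + (-(mc * (x - z₀))) := by ring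
      rw [h4]
      refine le_trans (hna _ _) (max_le hz2 ?_)
      rw [v.map_neg, v.map_mul]
      calc v mc * v (x - z₀) ≤ μ * R₀ := by
            refine mul_le_mul (le_max_left _ _) hxz (v.nonneg _) hμ.le
        _ = a₀ := hμR
  have hdisk : filledJulia v φ = {x : Cv | v (x - b) ≤ R₀} := by
    ext x
    constructor
    · exact hdisk1 x
    · intro hx
      rw [hchar]
      exact hdisk2 x hx
  -- the escape radius bound: v lc * R₀ ^ d ≤ R₀
  have hlcR : v φ.leadingCoeff * R₀ ^ (d - 1) ≤ 1 := by
    obtain ⟨s, hcard, hev, hfac⟩ := preimage_factorization hdeg hd z₀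
    have hsJ : ∀ γ ∈ s, γ ∈ filledJulia v φ := by
      intro γ hγ
      exact mem_filledJulia_of_image v (by rw [hev γ hγ]; exact hz₀J)
    set t₀ : Cv := e / (m * m) with ht₀'
    have ht₀ : v t₀ = R₀ := by
      rw [ht₀', map_div₀, v.map_mul, hmμ, hR₀', ha₀']
      field_simp
    obtain ⟨u, hu1, hu2⟩ := separated_units v hna (d + 1)
    -- pigeonhole: some point b + t₀ * u j avoids all root-disks
    have hpigeon : ∃ j < d + 1, ∀ γ ∈ s, ¬ v (b + t₀ * u j - γ) < R₀ := by
      by_contra hcon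
      push_neg at hcon
      have hchoice : ∀ j : ℕ, ∃ γ : Cv, j < d + 1 →
          γ ∈ s.toFinset ∧ v (b + t₀ * u j - γ) < R₀ := by
        intro j
        by_cases hj : j < d + 1
        · obtain ⟨γ, hγs, hγ⟩ := hcon j hj
          exact ⟨γ, fun _ => ⟨Multiset.mem_toFinset.mpr hγs, hγ⟩⟩
        · exact ⟨0, fun h => absurd h hj⟩
      choose f hf using hchoice
      have hf1 : ∀ j ∈ Finset.range (d + 1), f j ∈ s.toFinset :=
        fun j hj => (hf j (Finset.mem_range.mp hj)).1
      have hcardlt : s.toFinset.card < (Finset.range (d + 1)).card := by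
        rw [Finset.card_range]
        have := Multiset.toFinset_card_le s
        omega
      obtain ⟨j, hj, j', hj', hjj, heq⟩ :=
        Finset.exists_ne_map_eq_of_card_lt_of_maps_to hcardlt hf1
      have h1 := (hf j (Finset.mem_range.mp hj)).2
      have h2 := (hf j' (Finset.mem_range.mp hj')).2
      rw [heq] at h1
      have h3 : v (t₀ * (u j - u j')) < R₀ := by
        have h4 : t₀ * (u j - u j') =
            (b + t₀ * u j - f j') - (b + t₀ * u j' - f j') := by ring
        rw [h4, sub_eq_add_neg]
        refine lt_of_le_of_lt (hna _ _) ?_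
        rw [v.map_neg]
        exact max_lt h1 h2
      rw [v.map_mul, ht₀,
        hu2 j (Finset.mem_range.mp hj) j' (Finset.mem_range.mp hj') hjj, mul_one] at h3
      exact absurd h3 (lt_irrefl _)
    obtain ⟨j, hjd, hj⟩ := hpigeon
    set x : Cv := b + t₀ * u j with hx'
    have hxb : v (x - b) ≤ R₀ := by
      rw [hx', add_sub_cancel_left, v.map_mul, ht₀]
      nlinarith [hu1 j, v.nonneg (u j), hR₀]
    have hxJ : x ∈ filledJulia v φ := by
      rw [hdisk]
      exact hxb
    have hxγ : ∀ γ ∈ s, v (x - γ) = R₀ := by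
      intro γ hγ
      refine le_antisymm ?_ (not_lt.mp (hj γ hγ))
      exact dist_le_of_mem_disk v hna hxb (hdisk1 γ (hsJ γ hγ))
    have hval : v (φ.eval x - z₀) = v φ.leadingCoeff * R₀ ^ d := by
      rw [hfac x, v.map_mul]
      congr 1
      rw [map_multiset_prod, Multiset.map_map]
      have : ∀ y ∈ s.map fun γ => v (x - γ), y = R₀ := by
        intro y hy
        obtain ⟨γ, hγ, rfl⟩ := Multiset.mem_map.mp hy
        exact hxγ γ hγ
      calc ((s.map fun γ => v (x - γ))).prod = R₀ ^ Multiset.card (s.map fun γ => v (x - γ)) :=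
            prod_eq_pow_of_eq this
        _ = R₀ ^ d := by rw [Multiset.card_map, hcard]
    have hvle : v (φ.eval x - z₀) ≤ R₀ := by
      have h1 : φ.eval x ∈ filledJulia v φ := image_mem_filledJulia v hxJ
      exact dist_le_of_mem_disk v hna (hdisk1 _ h1) (hdisk1 _ hz₀J)
    rw [hval] at hvle
    have hsplit : v φ.leadingCoeff * R₀ ^ d = (v φ.leadingCoeff * R₀ ^ (d - 1)) * R₀ := by
      rw [mul_assoc, ← pow_succ]
      congr 2
      omega
    rw [hsplit] at hvle
    exact (mul_le_iff_le_one_left hR₀).mp hvle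
  -- conclude
  have hrR : r ≤ R₀ := hmin b R₀ hR₀ (by rw [← hdisk])
  have hge := stepA v hna hdeg hd hr hsub hmin
  have hle2 : v φ.leadingCoeff * r ^ (d - 1) ≤ 1 := by
    refine le_trans ?_ hlcR
    refine mul_le_mul_of_nonneg_left ?_ (v.nonneg _)
    exact pow_le_pow_left₀ hr.le hrR (d - 1)
  linarith

end Aux11
/-- Lemma 2.5c: Let `C_v` be a complete, algebraically closed field with a
nontrivial non-archimedean absolute value, `φ ∈ C_v[z]` a polynomial of degree `d ≥ 2`
with leading coefficient `a_d`, and `ρ_v = |a_d|^{-1/(d-1)}`.  Let `U₀ = D̄(a, r)` be the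
unique smallest disk containing the filled Julia set `𝔎_{φ,v}`, a closed disk of radius
`r ≥ ρ_v`.  Then `φ` has potentially good reduction iff `r = ρ_v`; and in that case
`𝔎_{φ,v} = U₀`. -/
theorem potentiallyGoodReduction_iff_radius_eq
    {Cv : Type*} [Field Cv] [IsAlgClosed Cv]
    (v : AbsoluteValue Cv ℝ)
    (hna : IsNonarchimedean v)
    (hnt : ∃ x : Cv, x ≠ 0 ∧ v x ≠ 1)
    (hcomp : SeqComplete v)
    (φ : Polynomial Cv) (d : ℕ) (hdeg : φ.natDegree = d) (hd : 2 ≤ d)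
    (a : Cv) (r : ℝ) (hr : 0 < r)
    -- `D̄(a, r)` contains the filled Julia set, and `r` is minimal such
    (hsub : filledJulia v φ ⊆ {x : Cv | v (x - a) ≤ r})
    (hmin : ∀ (b : Cv) (r' : ℝ), 0 < r' →
      filledJulia v φ ⊆ {x : Cv | v (x - b) ≤ r'} → r ≤ r') :
    (HasPotentiallyGoodReduction v φ ↔ r = (v φ.leadingCoeff) ^ (-(1 / ((d : ℝ) - 1)))) ∧
    (r = (v φ.leadingCoeff) ^ (-(1 / ((d : ℝ) - 1))) →
      filledJulia v φ = {x : Cv | v (x - a) ≤ r}) := by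
  have hK : 0 < v φ.leadingCoeff := leadingCoeff_pos v hdeg hd
  constructor
  · constructor
    · intro hpgr
      have h1 := hard_side v hna hdeg hd hr hsub hmin hpgr
      exact (radius_eq_iff hK hr hd).mp h1
    · intro hreq
      have h1 : v φ.leadingCoeff * r ^ (d - 1) = 1 := (radius_eq_iff hK hr hd).mpr hreq
      exact (easy_side v hna hdeg hd hr hsub h1).1
  · intro hreq
    have h1 : v φ.leadingCoeff * r ^ (d - 1) = 1 := (radius_eq_iff hK hr hd).mpr hreq
    exact (easy_side v hna hdeg hd hr hsub h1).2
end
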